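/- arXiv:2503.06628 — 12 statements merged into one kernel-verified Lean document; each statement's English description precedes it below -/
import Mathlib

section
/- Let μ > 0, let f : ℝ^d → ℝ be differentiable and 2μ-strongly convex, let α ∈ [0,1), let g̃ be an inexact gradient of f with relative error α, and set ρ = 1 + α. Then for all z, x ∈ ℝ^d: f(z) − ((ρ² + α²)/(2μ))·‖∇f(z)‖² + (μ/2)·‖x − z + (1/μ)·g̃(z)‖² ≤ f(x). -/
open scoped RealInnerProductSpace

set_option maxHeartbeats 1000000 in
/-- Lemma (lower quadratic bound from a relative-error inexact gradient for a
`2μ`-strongly convex function), with `ρ = 1 + α`. -/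
theorem stmt_1 {d : ℕ} (μ : ℝ) (hμ : 0 < μ)
    (f : EuclideanSpace ℝ (Fin d) → ℝ) (hf : Differentiable ℝ f)
    (hsc : ∀ x z : EuclideanSpace ℝ (Fin d),
      f x - f z - ⟪gradient f z, x - z⟫ ≥ μ * ‖x - z‖ ^ 2)
    (α : ℝ) (hα₀ : 0 ≤ α) (hα₁ : α < 1)
    (g' : EuclideanSpace ℝ (Fin d) → EuclideanSpace ℝ (Fin d))
    (hg : ∀ x, ‖g' x - gradient f x‖ ≤ α * ‖gradient f x‖) :
    ∀ z x : EuclideanSpace ℝ (Fin d),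
      f z - ((1 + α) ^ 2 + α ^ 2) / (2 * μ) * ‖gradient f z‖ ^ 2
        + μ / 2 * ‖x - z + μ⁻¹ • g' z‖ ^ 2 ≤ f x := by
  intro z x
  set g := gradient f z with hgdef
  set u := x - z with hudef
  set e := g' z - g with hedef
  have h1 : f x - f z - ⟪g, u⟫ ≥ μ * ‖u‖ ^ 2 := hsc x z
  have he : ‖e‖ ≤ α * ‖g‖ := hg z
  have ht : μ * μ⁻¹ = 1 := mul_inv_cancel₀ hμ.ne'
  have ht0 : 0 ≤ μ⁻¹ := inv_nonneg.2 hμ.le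
  have hge : g' z = g + e := by simp [hedef]
  -- expand the squared norm
  have hexp : ‖u + μ⁻¹ • g' z‖ ^ 2
      = ‖u‖ ^ 2 + 2 * (μ⁻¹ * (⟪u, g⟫ + ⟪u, e⟫)) + μ⁻¹ ^ 2 * ‖g' z‖ ^ 2 := by
    rw [norm_add_sq_real, real_inner_smul_right, norm_smul, hge, inner_add_right]
    simp [mul_pow, Real.norm_eq_abs, abs_of_pos (inv_pos.2 hμ)]
  have hcomm : ⟪g, u⟫ = ⟪u, g⟫ := real_inner_comm _ _
  have hcs : ⟪u, e⟫ ≤ ‖u‖ * ‖e‖ := real_inner_le_norm _ _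
  have hN : ‖g' z‖ ≤ ‖g‖ + ‖e‖ := by rw [hge]; exact norm_add_le _ _
  have hN0 : (0:ℝ) ≤ ‖g' z‖ := norm_nonneg _
  have hG0 : (0:ℝ) ≤ ‖g‖ := norm_nonneg _
  have hE0 : (0:ℝ) ≤ ‖e‖ := norm_nonneg _
  have hU0 : (0:ℝ) ≤ ‖u‖ := norm_nonneg _
  have hexp2 : μ / 2 * ‖u + μ⁻¹ • g' z‖ ^ 2
      = μ / 2 * ‖u‖ ^ 2 + (⟪u, g⟫ + ⟪u, e⟫) + μ⁻¹ / 2 * ‖g' z‖ ^ 2 := by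
    rw [hexp]; field_simp
  have key : 0 ≤ μ * ‖u‖ ^ 2 - 2 * ‖u‖ * ‖e‖ + μ⁻¹ * ‖e‖ ^ 2 := by
    have h := mul_nonneg ht0 (sq_nonneg (μ * ‖u‖ - ‖e‖))
    have : μ⁻¹ * (μ * ‖u‖ - ‖e‖) ^ 2
        = μ * ‖u‖ ^ 2 - 2 * ‖u‖ * ‖e‖ + μ⁻¹ * ‖e‖ ^ 2 := by
      field_simp; ring
    linarith [this ▸ h]
  have hdiv : ((1 + α) ^ 2 + α ^ 2) / (2 * μ)
      = ((1 + α) ^ 2 + α ^ 2) * μ⁻¹ / 2 := by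
    rw [mul_comm, ← div_div, div_eq_mul_inv, div_eq_mul_inv]; ring
  rw [hexp2, hdiv]
  have hsub : 0 ≤ α * ‖g‖ - ‖e‖ := sub_nonneg.2 he
  have hN2 : ‖g' z‖ ^ 2 ≤ (‖g‖ + ‖e‖) ^ 2 := by nlinarith
  nlinarith [key, hcs,
    mul_nonneg ht0 (mul_nonneg hsub (by positivity : (0:ℝ) ≤ (2 + α) * ‖g‖ + ‖e‖)),
    mul_nonneg ht0 (mul_nonneg hsub (by positivity : (0:ℝ) ≤ α * ‖g‖ + ‖e‖)),
    mul_nonneg ht0 (sub_nonneg.2 hN2)]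
end

section
/- Let 0 < μ < L and α ∈ [0, 1/2). Set m = 1 − 2α, s = 1 + 2α + 2α², L̂ = L(1 + α)/(1 − α)³, q = μ/L̂, and let a = ((m − s) + √((s − m)² + 4mq))/(2m) be the largest root of the quadratic equation m·a² + (s − m)·a − q = 0. Then 0 < a < 1. Moreover, if in addition α ≤ ((√2 − 1)/18)·√(μ/L), then a ≥ (1/10)·√(μ/L). -/
/-!
`a` is the positive root of `f(x) = m x² + (s - m) x - q`, an upward parabola, so comparing `a`
with a number `t` amounts to reading off the sign of `f(t)`. Since `f(0) = -q < 0` and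
`f(1) = s - q > 0` (the contraction factor `q` is below `μ / L < 1`), `0 < a < 1`. For the lower
bound write `r = √(μ/L)`: then `q ≥ r² / 12`, while a small `α ≤ r / 36` keeps
`m (r/10)² + (s - m) (r/10)` below `r² / 12`, so `f(r / 10) ≤ 0`.
-/

open Real

/-- The larger root of `m x² + b x - c`, when `0 < m`. -/
noncomputable def posRoot (m b c : ℝ) : ℝ :=
  (-b + √(b ^ 2 + 4 * m * c)) / (2 * m)

section posRoot

variable {m b c t : ℝ}

theorem lt_posRoot_of_lt (hm : 0 < m) (ht : m * t ^ 2 + b * t < c) : t < posRoot m b c := by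
  have hsq : (2 * m * t + b) ^ 2 < b ^ 2 + 4 * m * c := by nlinarith
  rw [posRoot, lt_div_iff₀ (by positivity)]
  linarith [lt_sqrt_of_sq_lt hsq]

theorem le_posRoot_of_le (hm : 0 < m) (ht : m * t ^ 2 + b * t ≤ c) : t ≤ posRoot m b c := by
  have hsq : (2 * m * t + b) ^ 2 ≤ b ^ 2 + 4 * m * c := by nlinarith
  rw [posRoot, le_div_iff₀ (by positivity)]
  linarith [le_sqrt_of_sq_le hsq]

theorem posRoot_lt_of_lt (hm : 0 < m) (hpos : 0 < 2 * m * t + b) (ht : c < m * t ^ 2 + b * t) :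
    posRoot m b c < t := by
  have hsq : b ^ 2 + 4 * m * c < (2 * m * t + b) ^ 2 := by nlinarith
  rw [posRoot, div_lt_iff₀ (by positivity)]
  linarith [(sqrt_lt' hpos).2 hsq]

end posRoot

theorem one_div_twelve_le_one_sub_cube_div_one_add {α : ℝ} (hα₀ : 0 ≤ α) (hα₁ : α < 1 / 2) :
    1 / 12 ≤ (1 - α) ^ 3 / (1 + α) := by
  rw [le_div_iff₀ (by linarith)]
  have hcube : (1 / 2 : ℝ) ^ 3 ≤ (1 - α) ^ 3 := by gcongr; linarith
  linarith

theorem one_sub_cube_div_one_add_le_one {α : ℝ} (hα₀ : 0 ≤ α) (hα₁ : α < 1 / 2) :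
    (1 - α) ^ 3 / (1 + α) ≤ 1 := by
  rw [div_le_one (by linarith)]
  have hcube : (1 - α) ^ 3 ≤ 1 := pow_le_one₀ (by linarith) (by linarith)
  linarith

theorem sqrt_two_sub_one_div_eighteen_lt : (√2 - 1) / 18 < 1 / 36 := by
  have h : √2 < 3 / 2 := (sqrt_lt' (by norm_num)).2 (by norm_num)
  linarith

theorem quadratic_at_div_ten_le {α r : ℝ} (hα₀ : 0 ≤ α) (hαr : α ≤ r / 36) (hr : r ≤ 1) :
    (1 - 2 * α) * (r / 10) ^ 2 + (4 * α + 2 * α ^ 2) * (r / 10) ≤ r ^ 2 / 12 := by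
  have hr₀ : 0 ≤ r := by linarith
  have hα : α ≤ 1 / 36 := by linarith
  nlinarith [mul_le_mul_of_nonneg_left hαr hr₀, mul_nonneg hα₀ hr₀,
    mul_le_mul_of_nonneg_left hα (mul_nonneg hα₀ hr₀)]

/-- Lemma on the RE-AGM step-size coefficient `a`: `0 < a < 1`, and if moreover
`α ≤ ((√2 − 1)/18)·√(μ/L)` then `a ≥ (1/10)·√(μ/L)`. -/
theorem stmt_2 (μ L α : ℝ) (hμ : 0 < μ) (hμL : μ < L)
    (hα₀ : 0 ≤ α) (hα₁ : α < 1 / 2)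
    (m s Lhat q a : ℝ)
    (hm : m = 1 - 2 * α)
    (hs : s = 1 + 2 * α + 2 * α ^ 2)
    (hLhat : Lhat = L * (1 + α) / (1 - α) ^ 3)
    (hq : q = μ / Lhat)
    (ha : a = ((m - s) + Real.sqrt ((s - m) ^ 2 + 4 * m * q)) / (2 * m)) :
    (0 < a ∧ a < 1) ∧
      (α ≤ (Real.sqrt 2 - 1) / 18 * Real.sqrt (μ / L) →
        a ≥ 1 / 10 * Real.sqrt (μ / L)) := by
  have hL : 0 < L := hμ.trans hμL
  have hm₀ : 0 < m := by rw [hm]; linarith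
  have hsm : s - m = 4 * α + 2 * α ^ 2 := by rw [hs, hm]; ring
  have hsm₀ : 0 ≤ s - m := by rw [hsm]; positivity
  have hq' : q = μ / L * ((1 - α) ^ 3 / (1 + α)) := by
    rw [hq, hLhat]; field_simp
  have hq₀ : 0 < q := by
    rw [hq']
    exact mul_pos (div_pos hμ hL)
      ((by norm_num : (0 : ℝ) < 1 / 12).trans_le (one_div_twelve_le_one_sub_cube_div_one_add hα₀ hα₁))
  have hqs : q < s :=
    calc q = μ / L * ((1 - α) ^ 3 / (1 + α)) := hq'
      _ ≤ μ / L := mul_le_of_le_one_right (by positivity) (one_sub_cube_div_one_add_le_one hα₀ hα₁)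
      _ < 1 := (div_lt_one hL).2 hμL
      _ ≤ s := by rw [hs]; nlinarith
  replace ha : a = posRoot m (s - m) q := by rw [ha, posRoot, neg_sub]
  refine ⟨⟨?_, ?_⟩, fun hαr => ?_⟩
  · rw [ha]; exact lt_posRoot_of_lt hm₀ (by simpa using hq₀)
  · rw [ha]; exact posRoot_lt_of_lt hm₀ (by linarith) (by linarith)
  set r := √(μ / L)
  have hr₀ : 0 ≤ r := sqrt_nonneg _
  have hr₁ : r ≤ 1 := sqrt_le_one.2 ((div_lt_one hL).2 hμL).le
  have hrq : r ^ 2 / 12 ≤ q := by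
    rw [hq', ← sq_sqrt (div_pos hμ hL).le]
    nlinarith [one_div_twelve_le_one_sub_cube_div_one_add hα₀ hα₁, sq_nonneg r]
  have hα : α ≤ r / 36 := by nlinarith [sqrt_two_sub_one_div_eighteen_lt]
  rw [ha, ge_iff_le, one_div_mul_eq_div]
  refine le_posRoot_of_le hm₀ ((?_ : _ ≤ r ^ 2 / 12).trans hrq)
  rw [hsm, hm]
  exact quadratic_at_div_ten_le hα₀ hα hr₁
end

section
/- Let 0 < μ < L, let τ ∈ [0, 1/2], and let α = (1/3)·(μ/L)^{1/2 − τ}. Set m = 1 − 2α, s = 1 + 2α + 2α², L̂ = L(1 + α)/(1 − α)³, q = μ/L̂, and let a = ((m − s) + √((s − m)² + 4mq))/(2m) be the largest root of m·a² + (s − m)·a − q = 0. Then a ≥ (1/10)·(μ/L)^{1/2 + τ}. -/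
set_option maxHeartbeats 1600000 in
/-- Lemma on the RE-AGM step-size coefficient `a` with
`α = (1/3)·(μ/L)^{1/2 − τ}`: then `a ≥ (1/10)·(μ/L)^{1/2 + τ}`. -/
theorem stmt_3 (μ L τ α : ℝ) (hμ : 0 < μ) (hμL : μ < L)
    (hτ₀ : 0 ≤ τ) (hτ₁ : τ ≤ 1 / 2)
    (hα : α = 1 / 3 * (μ / L) ^ ((1 : ℝ) / 2 - τ))
    (m s Lhat q a : ℝ)
    (hm : m = 1 - 2 * α)
    (hs : s = 1 + 2 * α + 2 * α ^ 2)
    (hLhat : Lhat = L * (1 + α) / (1 - α) ^ 3)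
    (hq : q = μ / Lhat)
    (ha : a = ((m - s) + Real.sqrt ((s - m) ^ 2 + 4 * m * q)) / (2 * m)) :
    a ≥ 1 / 10 * (μ / L) ^ ((1 : ℝ) / 2 + τ) := by
  have hL : 0 < L := hμ.trans hμL
  set r : ℝ := μ / L with hr_def
  have hr0 : 0 < r := div_pos hμ hL
  have hr1 : r < 1 := (div_lt_one hL).mpr hμL
  have hα0 : 0 < α := by
    rw [hα]; positivity
  have hα3 : α ≤ 1 / 3 := by
    rw [hα]
    have : r ^ ((1:ℝ)/2 - τ) ≤ 1 :=
      Real.rpow_le_one hr0.le hr1.le (by linarith)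
    nlinarith
  set R : ℝ := r ^ ((1:ℝ)/2 + τ) with hR_def
  have hR0 : 0 < R := Real.rpow_pos_of_pos hr0 _
  have hkey : R * (3 * α) = r := by
    rw [hα, hR_def]
    rw [show r ^ ((1:ℝ)/2 + τ) * (3 * (1/3 * r ^ ((1:ℝ)/2 - τ))) =
      r ^ ((1:ℝ)/2 + τ) * r ^ ((1:ℝ)/2 - τ) by ring, ← Real.rpow_add hr0]
    norm_num
  have hRsq : R ^ 2 ≤ r := by
    have h1 : R ≤ r ^ ((1:ℝ)/2) :=
      Real.rpow_le_rpow_of_exponent_ge hr0 hr1.le (by linarith)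
    have h2 : (r ^ ((1:ℝ)/2)) ^ 2 = r := by
      rw [← Real.rpow_natCast (r ^ ((1:ℝ)/2)) 2, ← Real.rpow_mul hr0.le]
      norm_num
    calc R ^ 2 ≤ (r ^ ((1:ℝ)/2)) ^ 2 := by nlinarith
      _ = r := h2
  -- q in terms of r and α
  have h1α : (0:ℝ) < 1 - α := by linarith
  have hqval : q = r * (1 - α) ^ 3 / (1 + α) := by
    rw [hq, hLhat, hr_def]
    field_simp
  have hqlb : q ≥ 2 / 9 * r := by
    rw [hqval, ge_iff_le, le_div_iff₀ (by linarith : (0:ℝ) < 1 + α)]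
    have h13 : (0:ℝ) ≤ 1 - 3 * α := by linarith
    have hquad : (0:ℝ) ≤ 3 * α ^ 2 - 8 * α + 7 := by nlinarith [sq_nonneg (α - 1)]
    nlinarith [mul_nonneg (mul_nonneg hr0.le h13) hquad]
  clear_value r R
  clear hα hR_def hr_def hq hLhat
  set b : ℝ := R / 10 with hb_def
  have hm0 : (0:ℝ) < m := by rw [hm]; linarith
  -- f(b) ≤ 0
  have hfb : m * b ^ 2 + (s - m) * b ≤ q := by
    have h1 : m * b ^ 2 ≤ r / 100 := by
      have : b ^ 2 = R ^ 2 / 100 := by rw [hb_def]; ring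
      nlinarith
    have h2 : (s - m) * b = r * (4 + 2 * α) / 30 := by
      rw [hs, hm, hb_def, ← hkey]; ring
    have h3 : (s - m) * b ≤ 7 / 45 * r := by
      rw [h2, div_le_iff₀ (by norm_num : (0:ℝ) < 30)]
      have h13 := mul_nonneg hr0.le (show (0:ℝ) ≤ 1 - 3 * α by linarith)
      nlinarith [h13]
    linarith [hqlb]
  -- sqrt bound
  have hq0 : 0 ≤ q := by linarith [hqlb, hr0]
  have hD : (2 * m * b + (s - m)) ^ 2 ≤ (s - m) ^ 2 + 4 * m * q := by
    have h := mul_le_mul_of_nonneg_left hfb hm0.le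
    nlinarith [h]
  have hsm0 : 0 ≤ s - m := by rw [hs, hm]; nlinarith
  have hnum : 2 * m * b + (s - m) ≤ Real.sqrt ((s - m) ^ 2 + 4 * m * q) := by
    have hpos : 0 ≤ 2 * m * b + (s - m) := by positivity
    exact (Real.le_sqrt hpos (by positivity)).mpr hD
  -- conclude
  have hbR : 1 / 10 * R = b := by rw [hb_def]; ring
  rw [ha, hbR, ge_iff_le, le_div_iff₀ (by linarith : (0:ℝ) < 2 * m)]
  linarith
end

section
/- Let f : ℝ^d → ℝ be differentiable and L-smooth, let α ∈ [0,1), let g̃ be an inexact gradient of f with relative error α, and set h = (1/L)·((1 − α)/(1 + α))^{3/2} and L̂ = L(1 + α)/(1 − α)³. Then for every x ∈ ℝ^d, the point y = x − h·g̃(x) satisfies f(y) ≤ f(x) − (1/(2L̂))·‖∇f(x)‖². -/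
open scoped RealInnerProductSpace

set_option maxHeartbeats 800000

/-- Lemma (descent of one inexact gradient step with relative error `α`). -/
theorem stmt_4 {d : ℕ} (L : ℝ) (hL : 0 < L)
    (f : EuclideanSpace ℝ (Fin d) → ℝ) (hf : Differentiable ℝ f)
    (hsmooth : ∀ x y : EuclideanSpace ℝ (Fin d),
      f y - f x - ⟪gradient f x, y - x⟫ ≤ L / 2 * ‖y - x‖ ^ 2)
    (α : ℝ) (hα₀ : 0 ≤ α) (hα₁ : α < 1)
    (g' : EuclideanSpace ℝ (Fin d) → EuclideanSpace ℝ (Fin d))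
    (hg : ∀ x, ‖g' x - gradient f x‖ ≤ α * ‖gradient f x‖)
    (h Lhat : ℝ)
    (hh : h = 1 / L * ((1 - α) / (1 + α)) ^ ((3 : ℝ) / 2))
    (hLhat : Lhat = L * (1 + α) / (1 - α) ^ 3) :
    ∀ x : EuclideanSpace ℝ (Fin d),
      f (x - h • g' x) ≤ f x - 1 / (2 * Lhat) * ‖gradient f x‖ ^ 2 := by
  intro x
  have h1p : (0:ℝ) < 1 + α := by linarith
  have h1m : (0:ℝ) < 1 - α := by linarith
  set r : ℝ := (1 - α) / (1 + α) with hr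
  have hr0 : 0 < r := div_pos h1m h1p
  have hre : r * (1 + α) = 1 - α := div_mul_cancel₀ _ h1p.ne'
  set t : ℝ := r ^ ((3:ℝ)/2) with ht
  have ht0 : 0 < t := Real.rpow_pos_of_pos hr0 _
  have ht2 : t ^ 2 = r ^ 3 := by
    rw [ht, ← Real.rpow_natCast (r ^ ((3:ℝ)/2)) 2, ← Real.rpow_mul hr0.le,
      ← Real.rpow_natCast r 3]
    norm_num
  have htsqrt : t = r * Real.sqrt r := by
    rw [ht, Real.sqrt_eq_rpow, show ((3:ℝ)/2) = 1 + 1/2 by norm_num,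
      Real.rpow_add hr0, Real.rpow_one]
  have hsr : 1 - α ≤ Real.sqrt r := by
    rw [show (1 - α) = Real.sqrt ((1-α)^2) by rw [Real.sqrt_sq h1m.le]]
    apply Real.sqrt_le_sqrt
    rw [hr, le_div_iff₀ h1p]
    nlinarith [mul_nonneg h1m.le (sq_nonneg α)]
  have htlb : r * (1 - α) ≤ t := by
    rw [htsqrt]
    exact mul_le_mul_of_nonneg_left hsr hr0.le
  have hht : h = t / L := by rw [hh, ht]; ring
  have hhpos : 0 < h := by rw [hht]; positivity
  -- key scalar inequality
  have hkey : -h * (1 - α) + L / 2 * (h ^ 2 * (1 + α) ^ 2) ≤ -(1 / (2 * Lhat)) := by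
    have ht3 : t ^ 2 * (1 + α) ^ 3 = (1 - α) ^ 3 := by rw [ht2, ← hre]; ring
    have hA : -h * (1 - α) + L / 2 * (h ^ 2 * (1 + α) ^ 2)
        = (-2 * t * (1 - α) * (1 + α) + t ^ 2 * (1 + α) ^ 3) / (2 * L * (1 + α)) := by
      rw [hht]; field_simp
    have hB : -(1 / (2 * Lhat)) = (-(1 - α) ^ 3) / (2 * L * (1 + α)) := by
      rw [hLhat]; field_simp
    have hfact : r * (1 - α) ^ 2 * (1 + α) = (1 - α) ^ 3 := by
      rw [show r * (1 - α) ^ 2 * (1 + α) = r * (1 + α) * (1 - α) ^ 2 by ring, hre]; ring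
    rw [hA, hB, div_le_div_iff_of_pos_right (by positivity)]
    nlinarith [mul_nonneg (mul_nonneg (sub_nonneg.2 htlb) h1m.le) h1p.le, hfact, ht3]
  -- geometry
  set g : EuclideanSpace ℝ (Fin d) := gradient f x with hgdef
  set gt : EuclideanSpace ℝ (Fin d) := g' x with hgtdef
  have hdiff : ‖gt - g‖ ≤ α * ‖g‖ := hg x
  have hinner : (1 - α) * ‖g‖ ^ 2 ≤ ⟪g, gt⟫ := by
    have h1 : ⟪g, gt⟫ = ‖g‖ ^ 2 + ⟪g, gt - g⟫ := by
      rw [inner_sub_right, real_inner_self_eq_norm_sq]; ring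
    have h2 : -(‖g‖ * ‖gt - g‖) ≤ ⟪g, gt - g⟫ := by
      have := abs_real_inner_le_norm g (gt - g)
      rw [abs_le] at this
      exact this.1
    have h3 : ‖g‖ * ‖gt - g‖ ≤ ‖g‖ * (α * ‖g‖) :=
      mul_le_mul_of_nonneg_left hdiff (norm_nonneg _)
    nlinarith
  have hgtnorm : ‖gt‖ ^ 2 ≤ (1 + α) ^ 2 * ‖g‖ ^ 2 := by
    have h1 : ‖gt‖ ≤ (1 + α) * ‖g‖ := by
      have e : g + (gt - g) = gt := by abel
      calc ‖gt‖ = ‖g + (gt - g)‖ := by rw [e]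
        _ ≤ ‖g‖ + ‖gt - g‖ := norm_add_le _ _
        _ ≤ (1 + α) * ‖g‖ := by nlinarith
    have h2 := pow_le_pow_left₀ (norm_nonneg gt) h1 2
    rw [mul_pow] at h2
    exact h2
  have hsm := hsmooth x (x - h • gt)
  have hyx : x - h • gt - x = -(h • gt) := sub_sub_cancel_left x (h • gt)
  rw [hyx] at hsm
  have hip : ⟪g, -(h • gt)⟫ = -(h * ⟪g, gt⟫) := by
    rw [inner_neg_right, real_inner_smul_right]
  have hnrm : ‖-(h • gt)‖ ^ 2 = h ^ 2 * ‖gt‖ ^ 2 := by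
    rw [norm_neg, norm_smul, Real.norm_eq_abs, mul_pow, sq_abs]
  rw [hip, hnrm] at hsm
  -- combine
  have hG : (0:ℝ) ≤ ‖g‖ ^ 2 := by positivity
  have step1 : f (x - h • gt) - f x ≤ -h * ((1 - α) * ‖g‖^2) + L / 2 * (h^2 * ((1+α)^2 * ‖g‖^2)) := by
    have e1 : -(h * ⟪g, gt⟫) ≤ -h * ((1 - α) * ‖g‖^2) := by nlinarith
    have e2 : L / 2 * (h^2 * ‖gt‖^2) ≤ L / 2 * (h^2 * ((1+α)^2 * ‖g‖^2)) := by
      have p1 := mul_le_mul_of_nonneg_left hgtnorm (sq_nonneg h)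
      have p2 := mul_le_mul_of_nonneg_left p1 (by positivity : (0:ℝ) ≤ L / 2)
      linarith
    nlinarith [hsm]
  have final : -h * ((1 - α) * ‖g‖^2) + L / 2 * (h^2 * ((1+α)^2 * ‖g‖^2))
      ≤ -(1 / (2 * Lhat)) * ‖g‖^2 := by nlinarith [mul_le_mul_of_nonneg_right hkey hG]
  linarith
end

section
/- Let 0 < μ < L, α ∈ [0, 1/2), let f : ℝ^d → ℝ be L-smooth and μ-strongly convex, and let g̃ be an inexact gradient of f with relative error α. Let x^k, y^k, u^k be the iterates of RE-AGM run with parameters (L, μ, x_start, α), i.e. with h = (1/L)·((1 − α)/(1 + α))^{3/2}, L̂ = L(1 + α)/(1 − α)³, s = 1 + 2α + 2α², m = 1 − 2α, q = μ/L̂, a the largest root of m·a² + (s − m)·a − q = 0, x⁰ = u⁰ = x_start, y^k = (a·u^k + x^k)/(1 + a), u^{k+1} = (1 − a)·u^k + a·y^k − (a/μ)·g̃(y^k), x^{k+1} = y^k − h·g̃(y^k). Define c₀ = f(x⁰) and c_{k+1} = (1 − a)·c_k + a·(f(y^k) − (((1 + α)² + α²)/(2μ))·‖∇f(y^k)‖²)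 + (a(1 − a)μ/2)·‖y^k − u^k − (1/μ)·g̃(y^k)‖². Then c_k ≥ f(x^k) for all k ≥ 0. -/
open scoped RealInnerProductSpace

set_option maxHeartbeats 1000000 in
/-- Lemma: along RE-AGM iterates, the estimate-sequence values `c_k` dominate
`f(x^k)`. -/
theorem stmt_5 {d : ℕ} (L μ α : ℝ) (hμ : 0 < μ) (hμL : μ < L)
    (hα₀ : 0 ≤ α) (hα₁ : α < 1 / 2)
    (f : EuclideanSpace ℝ (Fin d) → ℝ) (hf : Differentiable ℝ f)
    (hsmooth : ∀ x y : EuclideanSpace ℝ (Fin d),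
      f y - f x - ⟪gradient f x, y - x⟫ ≤ L / 2 * ‖y - x‖ ^ 2)
    (hconv : ∀ x y : EuclideanSpace ℝ (Fin d),
      μ / 2 * ‖y - x‖ ^ 2 ≤ f y - f x - ⟪gradient f x, y - x⟫)
    (g' : EuclideanSpace ℝ (Fin d) → EuclideanSpace ℝ (Fin d))
    (hg : ∀ x, ‖g' x - gradient f x‖ ≤ α * ‖gradient f x‖)
    (h Lhat s m q a : ℝ)
    (hh : h = 1 / L * ((1 - α) / (1 + α)) ^ ((3 : ℝ) / 2))
    (hLhat : Lhat = L * (1 + α) / (1 - α) ^ 3)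
    (hs : s = 1 + 2 * α + 2 * α ^ 2)
    (hm : m = 1 - 2 * α)
    (hq : q = μ / Lhat)
    (ha : a = ((m - s) + Real.sqrt ((s - m) ^ 2 + 4 * m * q)) / (2 * m))
    (xstart : EuclideanSpace ℝ (Fin d))
    (x u y : ℕ → EuclideanSpace ℝ (Fin d)) (c : ℕ → ℝ)
    (hx0 : x 0 = xstart) (hu0 : u 0 = xstart)
    (hy : ∀ k, y k = (1 + a)⁻¹ • (a • u k + x k))
    (hu : ∀ k, u (k + 1) = (1 - a) • u k + a • y k - (a / μ) • g' (y k))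
    (hx : ∀ k, x (k + 1) = y k - h • g' (y k))
    (hc0 : c 0 = f (x 0))
    (hc : ∀ k, c (k + 1) =
      (1 - a) * c k
        + a * (f (y k) - ((1 + α) ^ 2 + α ^ 2) / (2 * μ) * ‖gradient f (y k)‖ ^ 2)
        + a * (1 - a) * μ / 2 * ‖y k - u k - μ⁻¹ • g' (y k)‖ ^ 2) :
    ∀ k, c k ≥ f (x k) := by
  subst hs; subst hm
  have hL : 0 < L := lt_trans hμ hμL
  have h1a : 0 < 1 - α := by linarith
  have h1a' : 0 < 1 + α := by linarith
  have hm0 : 0 < 1 - 2 * α := by linarith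
  have hLhat0 : 0 < Lhat := by rw [hLhat]; positivity
  have hq0 : 0 < q := by rw [hq]; positivity
  -- Lhat ≥ L, so q < 1
  have hLge : L ≤ Lhat := by
    rw [hLhat, le_div_iff₀ (by positivity)]
    nlinarith [mul_nonneg (mul_nonneg hL.le hα₀) (sq_nonneg (α - 3/2)), mul_nonneg hL.le hα₀]
  have hq1 : q < 1 := by
    rw [hq, div_lt_one hLhat0]; linarith
  have hqs : q < 1 + 2 * α + 2 * α ^ 2 := by nlinarith [sq_nonneg α]
  -- root facts
  have hcnn : (0:ℝ) ≤ (1 + 2*α + 2*α^2) - (1 - 2*α) := by nlinarith [sq_nonneg α]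
  have hD : (0:ℝ) ≤ ((1 + 2*α + 2*α^2) - (1 - 2*α)) ^ 2 + 4 * (1 - 2*α) * q := by
    nlinarith [sq_nonneg ((1 + 2*α + 2*α^2) - (1 - 2*α)), mul_pos hm0 hq0]
  have hwD := Real.sq_sqrt hD
  have he : Real.sqrt (((1 + 2*α + 2*α^2) - (1 - 2*α)) ^ 2 + 4 * (1 - 2*α) * q)
      = 2 * (1 - 2*α) * a + ((1 + 2*α + 2*α^2) - (1 - 2*α)) := by
    rw [ha]; field_simp; ring
  have hsq : (2 * (1 - 2*α) * a + ((1 + 2*α + 2*α^2) - (1 - 2*α))) ^ 2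
      = ((1 + 2*α + 2*α^2) - (1 - 2*α)) ^ 2 + 4 * (1 - 2*α) * q := by
    rw [← he]; exact hwD
  have hsnn : 0 ≤ 2 * (1 - 2*α) * a + ((1 + 2*α + 2*α^2) - (1 - 2*α)) :=
    he ▸ Real.sqrt_nonneg _
  have hQ : (1 - 2*α) * a ^ 2 + ((1 + 2*α + 2*α^2) - (1 - 2*α)) * a = q := by
    have h4 : (4 * (1 - 2*α)) * ((1 - 2*α) * a ^ 2 + ((1 + 2*α + 2*α^2) - (1 - 2*α)) * a - q) = 0 := by
      linear_combination hsq
    rcases mul_eq_zero.mp h4 with h5 | h5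
    · exfalso; linarith
    · linarith
  have ha0 : 0 < a := by
    by_contra hcon
    push_neg at hcon
    nlinarith [hsq, hsnn, mul_pos hm0 hq0, hcnn]
  have ha1 : a < 1 := by
    by_contra hcon
    push_neg at hcon
    nlinarith [hQ, hqs, hm0, ha0, hcnn]
  have hP : 0 ≤ a * (1 - a) := by nlinarith
  -- sqrt facts for step size
  have hr0 : 0 < (1 - α) / (1 + α) := by positivity
  have hw2 : Real.sqrt ((1 - α) / (1 + α)) ^ 2 = (1 - α) / (1 + α) := Real.sq_sqrt hr0.le
  have hwge : 1 - α ≤ Real.sqrt ((1 - α) / (1 + α)) := by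
    have hle : (1 - α) ^ 2 ≤ (1 - α) / (1 + α) := by
      rw [le_div_iff₀ h1a']
      nlinarith [mul_nonneg h1a.le (sq_nonneg α)]
    calc 1 - α = Real.sqrt ((1 - α) ^ 2) := (Real.sqrt_sq h1a.le).symm
      _ ≤ Real.sqrt ((1 - α) / (1 + α)) := Real.sqrt_le_sqrt hle
  have hhrw : h = 1 / L * ((1 - α) / (1 + α) * Real.sqrt ((1 - α) / (1 + α))) := by
    rw [hh, Real.sqrt_eq_rpow,
      show ((3:ℝ)/2) = 1 + 1/2 by norm_num, Real.rpow_add hr0, Real.rpow_one]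
  have hh0 : 0 < h := by
    rw [hhrw]
    have := Real.sqrt_pos.mpr hr0
    positivity
  -- key step-size inequality
  have hκ : q ≤ 2 * μ * h * (1 - α) - μ * L * h ^ 2 * (1 + α) ^ 2 := by
    obtain ⟨w, hw⟩ : ∃ w, Real.sqrt ((1 - α) / (1 + α)) = w := ⟨_, rfl⟩
    rw [hw] at hw2 hwge
    have e1 : h = (1 - α) * w / (L * (1 + α)) := by
      rw [hhrw, hw]; field_simp
    have e3 : q = μ * (1 - α) ^ 3 / (L * (1 + α)) := by
      rw [hq, hLhat]; field_simp
    rw [e1, e3, ← sub_nonneg]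
    have hident : 2 * μ * ((1 - α) * w / (L * (1 + α))) * (1 - α)
        - μ * L * ((1 - α) * w / (L * (1 + α))) ^ 2 * (1 + α) ^ 2
        - μ * (1 - α) ^ 3 / (L * (1 + α))
        = μ * (1 - α) ^ 2 * (2 * w - (1 - α) - w ^ 2 * (1 + α)) / (L * (1 + α)) := by
      field_simp; ring
    rw [hident]
    apply div_nonneg _ (by positivity)
    have hw2' : w ^ 2 * (1 + α) = 1 - α := by
      rw [hw2]; field_simp
    rw [hw2']
    nlinarith [mul_nonneg (mul_nonneg hμ.le (sq_nonneg (1 - α))) (sub_nonneg.2 hwge)]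
  -- induction
  intro k
  induction k with
  | zero => rw [hc0]
  | succ k ih =>
    -- abbreviations (as plain expressions)
    have hgk := hg (y k)
    -- x_{k+1} - y_k
    have hxk : x (k + 1) - y k = -(h • g' (y k)) := by rw [hx k]; exact sub_sub_cancel_left _ _
    -- smoothness bound
    have hA := hsmooth (y k) (x (k + 1))
    rw [hxk, inner_neg_right, real_inner_smul_right, norm_neg, norm_smul,
      Real.norm_eq_abs, abs_of_pos hh0] at hA
    -- hA : f (x (k+1)) - f (y k) - -(h * ⟪G, Gt⟫) ≤ L/2 * (h * ‖Gt‖)^2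
    -- inner products bounds
    have hB : (1 - α) * ‖gradient f (y k)‖ ^ 2 ≤ ⟪gradient f (y k), g' (y k)⟫ := by
      have h1 := real_inner_le_norm (gradient f (y k)) (gradient f (y k) - g' (y k))
      have h3 : ‖gradient f (y k) - g' (y k)‖ = ‖g' (y k) - gradient f (y k)‖ := norm_sub_rev _ _
      have h4 : ⟪gradient f (y k), gradient f (y k) - g' (y k)⟫
          = ‖gradient f (y k)‖ ^ 2 - ⟪gradient f (y k), g' (y k)⟫ := by
        rw [inner_sub_right, real_inner_self_eq_norm_sq]
      rw [h4, h3] at h1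
      linarith [mul_le_mul_of_nonneg_left hgk (norm_nonneg (gradient f (y k)))]
    have hC : ‖g' (y k)‖ ≤ (1 + α) * ‖gradient f (y k)‖ := by
      calc ‖g' (y k)‖ = ‖(g' (y k) - gradient f (y k)) + gradient f (y k)‖ := by
            rw [sub_add_cancel]
        _ ≤ ‖g' (y k) - gradient f (y k)‖ + ‖gradient f (y k)‖ := norm_add_le _ _
        _ ≤ (1 + α) * ‖gradient f (y k)‖ := by linarith
    have hDge : (1 - α) * ‖gradient f (y k)‖ ≤ ‖g' (y k)‖ := by
      have h1 : ‖gradient f (y k)‖ ≤ ‖gradient f (y k) - g' (y k)‖ + ‖g' (y k)‖ := by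
        calc ‖gradient f (y k)‖ = ‖(gradient f (y k) - g' (y k)) + g' (y k)‖ := by
              rw [sub_add_cancel]
          _ ≤ _ := norm_add_le _ _
      rw [norm_sub_rev] at h1
      linarith
    -- geometric relation  x_k - y_k = a • (y_k - u_k)
    have hXY : x k - y k = a • (y k - u k) := by
      have h1 : (1 + a) • y k = a • u k + x k := by
        rw [hy k, smul_smul, mul_inv_cancel₀ (by positivity), one_smul]
      linear_combination (norm := module) -h1
    -- convexity bound
    have hE : f (y k) + a * ⟪gradient f (y k), y k - u k⟫ ≤ c k := by
      have h1 := hconv (y k) (x k)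
      rw [hXY, real_inner_smul_right] at h1
      have h2 : 0 ≤ μ / 2 * ‖a • (y k - u k)‖ ^ 2 := by positivity
      have := ih
      linarith
    -- error inner product bound
    have hF : -(α * ‖gradient f (y k)‖ * ‖y k - u k‖)
        ≤ ⟪gradient f (y k), y k - u k⟫ - ⟪g' (y k), y k - u k⟫ := by
      have h1 := real_inner_le_norm (g' (y k) - gradient f (y k)) (y k - u k)
      have h3 : ⟪g' (y k) - gradient f (y k), y k - u k⟫
          = ⟪g' (y k), y k - u k⟫ - ⟪gradient f (y k), y k - u k⟫ := by
        rw [inner_sub_left]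
      rw [h3] at h1
      linarith [mul_le_mul_of_nonneg_right hgk (norm_nonneg (y k - u k))]
    -- norm expansion
    have hGexp : ‖y k - u k - μ⁻¹ • g' (y k)‖ ^ 2
        = ‖y k - u k‖ ^ 2 - 2 * (μ⁻¹ * ⟪g' (y k), y k - u k⟫) + μ⁻¹ ^ 2 * ‖g' (y k)‖ ^ 2 := by
      rw [norm_sub_sq_real, real_inner_smul_right, norm_smul, Real.norm_eq_abs,
        abs_of_pos (inv_pos.2 hμ), real_inner_comm]
      ring
    -- c (k+1) with denominators cleared
    have hc' : 2 * μ * c (k + 1)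
        = 2 * μ * ((1 - a) * c k) + 2 * μ * a * f (y k)
          - a * ((1 + α) ^ 2 + α ^ 2) * ‖gradient f (y k)‖ ^ 2
          + a * (1 - a) * (μ ^ 2 * ‖y k - u k‖ ^ 2
            - 2 * μ * ⟪g' (y k), y k - u k⟫ + ‖g' (y k)‖ ^ 2) := by
      rw [hc k, hGexp]; field_simp; ring
    -- key2: upper bound on f (x (k+1))
    have hC2 : ‖g' (y k)‖ ^ 2 ≤ ((1 + α) * ‖gradient f (y k)‖) ^ 2 :=
      pow_le_pow_left₀ (norm_nonneg _) hC 2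
    have P0 : 2 * μ * (f (x (k + 1)) - f (y k) - -(h * ⟪gradient f (y k), g' (y k)⟫))
        ≤ 2 * μ * (L / 2 * (h * ‖g' (y k)‖) ^ 2) :=
      mul_le_mul_of_nonneg_left hA (by positivity)
    have P1 : 2 * μ * h * ((1 - α) * ‖gradient f (y k)‖ ^ 2)
        ≤ 2 * μ * h * ⟪gradient f (y k), g' (y k)⟫ :=
      mul_le_mul_of_nonneg_left hB (by positivity)
    have P2 : μ * L * h ^ 2 * ‖g' (y k)‖ ^ 2
        ≤ μ * L * h ^ 2 * ((1 + α) * ‖gradient f (y k)‖) ^ 2 :=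
      mul_le_mul_of_nonneg_left hC2 (by positivity)
    have P3 : q * ‖gradient f (y k)‖ ^ 2
        ≤ (2 * μ * h * (1 - α) - μ * L * h ^ 2 * (1 + α) ^ 2) * ‖gradient f (y k)‖ ^ 2 :=
      mul_le_mul_of_nonneg_right hκ (sq_nonneg _)
    have key2 : 2 * μ * f (x (k + 1)) ≤ 2 * μ * f (y k) - q * ‖gradient f (y k)‖ ^ 2 := by
      linarith [P0, P1, P2, P3]
    -- key1: lower bound on c (k+1)
    have hE1 : 2 * μ * (1 - a) * (f (y k) + a * ⟪gradient f (y k), y k - u k⟫)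
        ≤ 2 * μ * (1 - a) * c k :=
      mul_le_mul_of_nonneg_left hE (mul_nonneg (by linarith : (0:ℝ) ≤ 2 * μ) (by linarith : (0:ℝ) ≤ 1 - a))
    have hF2 : 0 ≤ 2 * μ * (⟪gradient f (y k), y k - u k⟫ - ⟪g' (y k), y k - u k⟫)
        + α ^ 2 * ‖gradient f (y k)‖ ^ 2 + μ ^ 2 * ‖y k - u k‖ ^ 2 := by
      have h1 := mul_le_mul_of_nonneg_left hF (by positivity : (0:ℝ) ≤ 2 * μ)
      linarith [h1, sq_nonneg (α * ‖gradient f (y k)‖ - μ * ‖y k - u k‖)]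
    have hF2' : 0 ≤ a * (1 - a) * (2 * μ * (⟪gradient f (y k), y k - u k⟫ - ⟪g' (y k), y k - u k⟫)
        + α ^ 2 * ‖gradient f (y k)‖ ^ 2 + μ ^ 2 * ‖y k - u k‖ ^ 2) := mul_nonneg hP hF2
    have hD2 : (1 - α) ^ 2 * ‖gradient f (y k)‖ ^ 2 ≤ ‖g' (y k)‖ ^ 2 := by
      have := pow_le_pow_left₀ (by positivity) hDge 2
      linarith [this]
    have hD2' : 0 ≤ a * (1 - a) * (‖g' (y k)‖ ^ 2 - (1 - α) ^ 2 * ‖gradient f (y k)‖ ^ 2) :=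
      mul_nonneg hP (by linarith)
    have hQg : ((1 - 2*α) * a ^ 2 + ((1 + 2*α + 2*α^2) - (1 - 2*α)) * a) * ‖gradient f (y k)‖ ^ 2
        = q * ‖gradient f (y k)‖ ^ 2 := by rw [hQ]
    have key1 : 2 * μ * f (y k) - q * ‖gradient f (y k)‖ ^ 2 ≤ 2 * μ * c (k + 1) := by
      linarith [hc', hE1, hF2', hD2', hQg]
    have hfin : 2 * μ * f (x (k + 1)) ≤ 2 * μ * c (k + 1) := le_trans key2 key1
    have h2μ : 0 < 2 * μ := by positivity
    exact le_of_mul_le_mul_left hfin h2μ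
end

section
/- Let f : ℝ^{d_x} × ℝ^{d_y} → ℝ be differentiable with g_z μ-strongly monotone and L-Lipschitz (0 < μ ≤ L), let g̃_x, g̃_y be inexact partial gradients with relative error α ∈ [0,1), let z* satisfy g_z(z*) = 0, and let η > 0. Then the Inexact Sim-GDA iterates z^k = (x^k, y^k) with step η satisfy, for every k: ‖z^{k+1} − z*‖² ≤ (1 − 2(μ − αL)·η + (1 + α)²·L²·η²)·‖z^k − z*‖². -/
open scoped RealInnerProductSpace
set_option maxHeartbeats 4000000

private lemma cs2 (p q r s : ℝ) (hp : 0 ≤ p) (hq : 0 ≤ q) (hr : 0 ≤ r) (hs : 0 ≤ s) :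
    p * q + r * s ≤ Real.sqrt (p ^ 2 + r ^ 2) * Real.sqrt (q ^ 2 + s ^ 2) := by
  rw [← Real.sqrt_mul (by positivity)]
  rw [show p * q + r * s = Real.sqrt ((p*q + r*s)^2) from (Real.sqrt_sq (by positivity)).symm]
  apply Real.sqrt_le_sqrt
  nlinarith [sq_nonneg (p*s - r*q)]

/-- Lemma (one-step contraction of Inexact Sim-GDA for a strongly monotone,
Lipschitz saddle-point operator `g_z = (∇_x f, −∇_y f)` with relative error `α`).
The combined variable `z = (x, y)` is treated componentwise, with
`‖z‖² = ‖x‖² + ‖y‖²`. -/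
theorem stmt_10 {dx dy : ℕ} (μ L : ℝ) (hμ : 0 < μ) (hμL : μ ≤ L)
    (f : EuclideanSpace ℝ (Fin dx) → EuclideanSpace ℝ (Fin dy) → ℝ)
    (hf : Differentiable ℝ (fun p : EuclideanSpace ℝ (Fin dx) × EuclideanSpace ℝ (Fin dy) => f p.1 p.2))
    (gx : EuclideanSpace ℝ (Fin dx) → EuclideanSpace ℝ (Fin dy) → EuclideanSpace ℝ (Fin dx))
    (gy : EuclideanSpace ℝ (Fin dx) → EuclideanSpace ℝ (Fin dy) → EuclideanSpace ℝ (Fin dy))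
    (hgx : ∀ x y, gx x y = gradient (fun x' => f x' y) x)
    (hgy : ∀ x y, gy x y = gradient (fun y' => f x y') y)
    (hmono : ∀ x₀ y₀ x₁ y₁,
      ⟪gx x₁ y₁ - gx x₀ y₀, x₁ - x₀⟫ - ⟪gy x₁ y₁ - gy x₀ y₀, y₁ - y₀⟫
        ≥ μ * (‖x₁ - x₀‖ ^ 2 + ‖y₁ - y₀‖ ^ 2))
    (hlip : ∀ x₀ y₀ x₁ y₁,
      Real.sqrt (‖gx x₁ y₁ - gx x₀ y₀‖ ^ 2 + ‖gy x₁ y₁ - gy x₀ y₀‖ ^ 2)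
        ≤ L * Real.sqrt (‖x₁ - x₀‖ ^ 2 + ‖y₁ - y₀‖ ^ 2))
    (α : ℝ) (hα₀ : 0 ≤ α) (hα₁ : α < 1)
    (gtx : EuclideanSpace ℝ (Fin dx) → EuclideanSpace ℝ (Fin dy) → EuclideanSpace ℝ (Fin dx))
    (gty : EuclideanSpace ℝ (Fin dx) → EuclideanSpace ℝ (Fin dy) → EuclideanSpace ℝ (Fin dy))
    (hrel : ∀ x y, ‖gtx x y - gx x y‖ ^ 2 + ‖gty x y - gy x y‖ ^ 2
      ≤ α ^ 2 * (‖gx x y‖ ^ 2 + ‖gy x y‖ ^ 2))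
    (xstar : EuclideanSpace ℝ (Fin dx)) (ystar : EuclideanSpace ℝ (Fin dy))
    (hstar : gx xstar ystar = 0 ∧ gy xstar ystar = 0)
    (η : ℝ) (hη : 0 < η)
    (x : ℕ → EuclideanSpace ℝ (Fin dx)) (y : ℕ → EuclideanSpace ℝ (Fin dy))
    (hxit : ∀ k, x (k + 1) = x k - η • gtx (x k) (y k))
    (hyit : ∀ k, y (k + 1) = y k + η • gty (x k) (y k)) :
    ∀ k, ‖x (k + 1) - xstar‖ ^ 2 + ‖y (k + 1) - ystar‖ ^ 2
      ≤ (1 - 2 * (μ - α * L) * η + (1 + α) ^ 2 * L ^ 2 * η ^ 2)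
        * (‖x k - xstar‖ ^ 2 + ‖y k - ystar‖ ^ 2) := by
  intro k
  set a := x k - xstar with ha
  set b := y k - ystar with hb
  set u := gx (x k) (y k) with hu
  set v := gy (x k) (y k) with hv
  set eu := gtx (x k) (y k) - u with heu
  set ev := gty (x k) (y k) - v with hev
  have hP : (0:ℝ) ≤ ‖a‖ ^ 2 + ‖b‖ ^ 2 := by positivity
  set P := ‖a‖ ^ 2 + ‖b‖ ^ 2 with hPdef
  set sP := Real.sqrt P with hsP
  have hsP2 : sP ^ 2 = P := Real.sq_sqrt hP
  have hsPnn : 0 ≤ sP := Real.sqrt_nonneg _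
  set Nu := Real.sqrt (‖u‖ ^ 2 + ‖v‖ ^ 2) with hNu
  have hNunn : 0 ≤ Nu := Real.sqrt_nonneg _
  have hNu2 : Nu ^ 2 = ‖u‖ ^ 2 + ‖v‖ ^ 2 := Real.sq_sqrt (by positivity)
  set Ne := Real.sqrt (‖eu‖ ^ 2 + ‖ev‖ ^ 2) with hNe
  have hNenn : 0 ≤ Ne := Real.sqrt_nonneg _
  have hNe2 : Ne ^ 2 = ‖eu‖ ^ 2 + ‖ev‖ ^ 2 := Real.sq_sqrt (by positivity)
  -- Lipschitz at the solution
  have hlipP : Nu ≤ L * sP := by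
    have := hlip xstar ystar (x k) (y k)
    rwa [hstar.1, hstar.2, sub_zero, sub_zero] at this
  -- relative error
  have hNeNu : Ne ≤ α * Nu := by
    have h1 : Ne ≤ Real.sqrt (α ^ 2 * (‖u‖ ^ 2 + ‖v‖ ^ 2)) :=
      Real.sqrt_le_sqrt (hrel (x k) (y k))
    rwa [Real.sqrt_mul (sq_nonneg α), Real.sqrt_sq hα₀] at h1
  -- strong monotonicity at the solution
  have hmonoP : ⟪u, a⟫ - ⟪v, b⟫ ≥ μ * P := by
    have := hmono xstar ystar (x k) (y k)
    rwa [hstar.1, hstar.2, sub_zero, sub_zero] at this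
  -- error cross term
  have hcross : ⟪eu, a⟫ - ⟪ev, b⟫ ≥ -(α * L * P) := by
    have h1 : -(‖eu‖ * ‖a‖) ≤ ⟪eu, a⟫ := neg_le_of_abs_le (abs_real_inner_le_norm eu a)
    have h2 : ⟪ev, b⟫ ≤ ‖ev‖ * ‖b‖ := real_inner_le_norm ev b
    have h3 : ‖eu‖ * ‖a‖ + ‖ev‖ * ‖b‖ ≤ Ne * sP :=
      cs2 _ _ _ _ (norm_nonneg _) (norm_nonneg _) (norm_nonneg _) (norm_nonneg _)
    have h4 : Ne * sP ≤ α * L * P := by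
      calc Ne * sP ≤ (α * Nu) * sP := by
            apply mul_le_mul_of_nonneg_right hNeNu hsPnn
        _ ≤ (α * (L * sP)) * sP := by
            apply mul_le_mul_of_nonneg_right (mul_le_mul_of_nonneg_left hlipP hα₀) hsPnn
        _ = α * L * P := by rw [← hsP2]; ring
    nlinarith
  -- quadratic term
  have hquad : ‖u + eu‖ ^ 2 + ‖v + ev‖ ^ 2 ≤ (1 + α) ^ 2 * L ^ 2 * P := by
    have h1 : ⟪u, eu⟫ ≤ ‖u‖ * ‖eu‖ := real_inner_le_norm u eu
    have h2 : ⟪v, ev⟫ ≤ ‖v‖ * ‖ev‖ := real_inner_le_norm v ev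
    have h3 : ‖u‖ * ‖eu‖ + ‖v‖ * ‖ev‖ ≤ Nu * Ne :=
      cs2 _ _ _ _ (norm_nonneg _) (norm_nonneg _) (norm_nonneg _) (norm_nonneg _)
    have e1 : ‖u + eu‖ ^ 2 = ‖u‖ ^ 2 + 2 * ⟪u, eu⟫ + ‖eu‖ ^ 2 := norm_add_sq_real u eu
    have e2 : ‖v + ev‖ ^ 2 = ‖v‖ ^ 2 + 2 * ⟪v, ev⟫ + ‖ev‖ ^ 2 := norm_add_sq_real v ev
    have h4 : ‖u + eu‖ ^ 2 + ‖v + ev‖ ^ 2 ≤ (Nu + Ne) ^ 2 := by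
      rw [e1, e2]; nlinarith [hNu2, hNe2]
    have h5 : Nu + Ne ≤ (1 + α) * (L * sP) := by nlinarith
    have h6 : (Nu + Ne) ^ 2 ≤ ((1 + α) * (L * sP)) ^ 2 := by
      apply pow_le_pow_left₀ (by positivity) h5
    calc ‖u + eu‖ ^ 2 + ‖v + ev‖ ^ 2 ≤ ((1 + α) * (L * sP)) ^ 2 := le_trans h4 h6
      _ = (1 + α) ^ 2 * L ^ 2 * P := by rw [← hsP2]; ring
  -- expansion of the iterates
  have hgu : gtx (x k) (y k) = u + eu := by rw [heu]; abel
  have hgv : gty (x k) (y k) = v + ev := by rw [hev]; abel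
  have hx1 : x (k + 1) - xstar = a - η • (u + eu) := by
    rw [hxit k, hgu, ha]; abel
  have hy1 : y (k + 1) - ystar = b + η • (v + ev) := by
    rw [hyit k, hgv, hb]; abel
  have ex1 : ‖x (k + 1) - xstar‖ ^ 2
      = ‖a‖ ^ 2 - 2 * η * ⟪u + eu, a⟫ + η ^ 2 * ‖u + eu‖ ^ 2 := by
    rw [hx1, norm_sub_sq_real, real_inner_smul_right, norm_smul, mul_pow]
    rw [real_inner_comm]
    simp [abs_of_pos hη]
    ring
  have ey1 : ‖y (k + 1) - ystar‖ ^ 2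
      = ‖b‖ ^ 2 + 2 * η * ⟪v + ev, b⟫ + η ^ 2 * ‖v + ev‖ ^ 2 := by
    rw [hy1, norm_add_sq_real, real_inner_smul_right, norm_smul, mul_pow]
    rw [real_inner_comm]
    simp [abs_of_pos hη]
    ring
  have hinner : ⟪u + eu, a⟫ - ⟪v + ev, b⟫ ≥ (μ - α * L) * P := by
    rw [inner_add_left, inner_add_left]
    nlinarith
  rw [ex1, ey1]
  nlinarith [sq_nonneg η, mul_pos hη hη, hPdef]
end

section
/- Let f : ℝ^{d_x} × ℝ^{d_y} → ℝ be differentiable with g_z μ-strongly monotone and L-Lipschitz (0 < μ ≤ L), let α satisfy 0 ≤ α < μ/L, let g̃_x, g̃_y be inexact partial gradients with relative error α, and let z* satisfy g_z(z*) = 0. Then the Inexact Sim-GDA iterates with step η = (μ − αL)/((1 + α)²·L²) satisfy, for every N ≥ 0: ‖z^N − z*‖² ≤ (1 − (μ − αL)²/((1 + α)²·L²))^N·‖z⁰ − z*‖². -/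
set_option maxHeartbeats 1000000

open scoped RealInnerProductSpace


lemma aux_sq_le {X Y : ℝ} (hX : 0 ≤ X) (hY : 0 ≤ Y) (h : X^2 ≤ Y^2) : X ≤ Y := by
  nlinarith

lemma key_step {E₁ E₂ : Type*} [NormedAddCommGroup E₁] [InnerProductSpace ℝ E₁]
    [NormedAddCommGroup E₂] [InnerProductSpace ℝ E₂]
    (μ L α η : ℝ) (hμ : 0 < μ) (hL : 0 < L) (hα₀ : 0 ≤ α) (hαL : α * L < μ)
    (hη : η = (μ - α*L)/((1+α)^2*L^2))
    (u : E₁) (v : E₂) (a a' : E₁) (b b' : E₂)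
    (hmono : ⟪a, u⟫ - ⟪b, v⟫ ≥ μ * (‖u‖^2 + ‖v‖^2))
    (hlipS : ‖a‖^2 + ‖b‖^2 ≤ L^2 * (‖u‖^2 + ‖v‖^2))
    (hrel : ‖a' - a‖^2 + ‖b' - b‖^2 ≤ α^2 * (‖a‖^2 + ‖b‖^2)) :
    ‖u - η • a'‖^2 + ‖v + η • b'‖^2
      ≤ (1 - (μ - α*L)^2/((1+α)^2*L^2)) * (‖u‖^2 + ‖v‖^2) := by
  have hK : (0:ℝ) < (1+α)^2*L^2 := by positivity
  have hm : 0 < μ - α*L := by linarith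
  have hηpos : 0 ≤ η := by rw [hη]; positivity
  set Ee : ℝ := ‖u‖^2 + ‖v‖^2 with hEe
  have hEnn : 0 ≤ Ee := by positivity
  set S : ℝ := ‖a‖^2 + ‖b‖^2 with hS
  have hSnn : 0 ≤ S := by positivity
  -- expand norms
  have e1 : ‖u - η • a'‖^2 = ‖u‖^2 - 2*η*⟪a', u⟫ + η^2*‖a'‖^2 := by
    rw [norm_sub_sq_real, real_inner_smul_right, norm_smul, mul_pow, Real.norm_eq_abs,
      sq_abs, real_inner_comm]
    ring
  have e2 : ‖v + η • b'‖^2 = ‖v‖^2 + 2*η*⟪b', v⟫ + η^2*‖b'‖^2 := by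
    rw [norm_add_sq_real, real_inner_smul_right, norm_smul, mul_pow, Real.norm_eq_abs,
      sq_abs, real_inner_comm]
    ring
  -- Cauchy-Schwarz pieces
  have cs1 : ⟪a' - a, u⟫ ≥ -(‖a' - a‖ * ‖u‖) := by
    have := abs_real_inner_le_norm (a' - a) u; cases abs_le.mp this; linarith
  have cs2 : ⟪b' - b, v⟫ ≤ ‖b' - b‖ * ‖v‖ := real_inner_le_norm _ _
  -- ℝ² Cauchy–Schwarz: pq + rs ≤ α L E
  have hD : ‖a' - a‖^2 + ‖b' - b‖^2 ≤ α^2 * L^2 * Ee := by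
    have := mul_le_mul_of_nonneg_left hlipS (sq_nonneg α)
    nlinarith
  have hcross : ‖a' - a‖ * ‖u‖ + ‖b' - b‖ * ‖v‖ ≤ α * L * Ee := by
    apply aux_sq_le (by positivity) (by positivity)
    have h0 : (‖a' - a‖ * ‖u‖ + ‖b' - b‖ * ‖v‖)^2
        ≤ (‖a' - a‖^2 + ‖b' - b‖^2) * (‖u‖^2 + ‖v‖^2) := by
      nlinarith [sq_nonneg (‖a' - a‖ * ‖v‖ - ‖b' - b‖ * ‖u‖)]
    have h1 := mul_le_mul_of_nonneg_right hD hEnn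
    nlinarith
  -- inner bound
  have hA : ⟪a', u⟫ - ⟪b', v⟫ ≥ (μ - α*L) * Ee := by
    have d1 : ⟪a', u⟫ = ⟪a, u⟫ + ⟪a' - a, u⟫ := by
      rw [← inner_add_left]; congr 1; abel
    have d2 : ⟪b', v⟫ = ⟪b, v⟫ + ⟪b' - b, v⟫ := by
      rw [← inner_add_left]; congr 1; abel
    rw [d1, d2]; linarith
  -- norm bound
  have hcross2 : ‖a‖ * ‖a' - a‖ + ‖b‖ * ‖b' - b‖ ≤ α * S := by
    apply aux_sq_le (by positivity) (by positivity)
    have h0 : (‖a‖ * ‖a' - a‖ + ‖b‖ * ‖b' - b‖)^2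
        ≤ (‖a‖^2 + ‖b‖^2) * (‖a' - a‖^2 + ‖b' - b‖^2) := by
      nlinarith [sq_nonneg (‖a‖ * ‖b' - b‖ - ‖b‖ * ‖a' - a‖)]
    have h1 := mul_le_mul_of_nonneg_left hrel hSnn
    nlinarith
  have tri1 : ‖a'‖ ≤ ‖a‖ + ‖a' - a‖ := by
    have := norm_add_le a (a' - a); simpa using this
  have tri2 : ‖b'‖ ≤ ‖b‖ + ‖b' - b‖ := by
    have := norm_add_le b (b' - b); simpa using this
  have hB : ‖a'‖^2 + ‖b'‖^2 ≤ (1+α)^2 * L^2 * Ee := by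
    have h1 : ‖a'‖^2 ≤ (‖a‖ + ‖a' - a‖)^2 := by
      have := norm_nonneg a'; nlinarith [norm_nonneg a, norm_nonneg (a' - a)]
    have h2 : ‖b'‖^2 ≤ (‖b‖ + ‖b' - b‖)^2 := by
      have := norm_nonneg b'; nlinarith [norm_nonneg b, norm_nonneg (b' - b)]
    nlinarith
  -- final scalar combination
  rw [e1, e2, hη]
  have h1 : (μ - α*L)/((1+α)^2*L^2) * ((μ - α*L) * Ee)
      ≤ (μ - α*L)/((1+α)^2*L^2) * (⟪a', u⟫ - ⟪b', v⟫) :=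
    mul_le_mul_of_nonneg_left hA (by positivity)
  have h2 : ((μ - α*L)/((1+α)^2*L^2))^2 * (‖a'‖^2 + ‖b'‖^2)
      ≤ ((μ - α*L)/((1+α)^2*L^2))^2 * ((1+α)^2*L^2 * Ee) :=
    mul_le_mul_of_nonneg_left hB (by positivity)
  have q1 : (μ - α*L)/((1+α)^2*L^2) * ((μ - α*L) * Ee) = (μ - α*L)^2/((1+α)^2*L^2) * Ee := by
    field_simp
  have q2 : ((μ - α*L)/((1+α)^2*L^2))^2 * ((1+α)^2*L^2 * Ee)
      = (μ - α*L)^2/((1+α)^2*L^2) * Ee := by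
    field_simp
  rw [q1] at h1; rw [q2] at h2
  have expand : ‖u‖^2 - 2*((μ - α*L)/((1+α)^2*L^2))*⟪a', u⟫ + ((μ - α*L)/((1+α)^2*L^2))^2*‖a'‖^2
      + (‖v‖^2 + 2*((μ - α*L)/((1+α)^2*L^2))*⟪b', v⟫ + ((μ - α*L)/((1+α)^2*L^2))^2*‖b'‖^2)
      = Ee - 2*((μ - α*L)/((1+α)^2*L^2))*(⟪a', u⟫ - ⟪b', v⟫)
        + ((μ - α*L)/((1+α)^2*L^2))^2*(‖a'‖^2 + ‖b'‖^2) := by ring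
  rw [expand]
  have goal' : (1 - (μ - α*L)^2/((1+α)^2*L^2)) * Ee
      = Ee - 2*((μ - α*L)^2/((1+α)^2*L^2) * Ee) + (μ - α*L)^2/((1+α)^2*L^2) * Ee := by ring
  rw [goal']
  linarith


/-- Theorem 3 (linear convergence of Inexact Sim-GDA for strongly monotone,
Lipschitz saddle-point operators with relative error `α < μ/L` and step
`η = (μ − αL)/((1 + α)²L²)`). The combined variable `z = (x, y)` is treated
componentwise, with `‖z‖² = ‖x‖² + ‖y‖²`. -/
theorem stmt_11 {dx dy : ℕ} (μ L : ℝ) (hμ : 0 < μ) (hμL : μ ≤ L)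
    (f : EuclideanSpace ℝ (Fin dx) → EuclideanSpace ℝ (Fin dy) → ℝ)
    (hf : Differentiable ℝ (fun p : EuclideanSpace ℝ (Fin dx) × EuclideanSpace ℝ (Fin dy) => f p.1 p.2))
    (gx : EuclideanSpace ℝ (Fin dx) → EuclideanSpace ℝ (Fin dy) → EuclideanSpace ℝ (Fin dx))
    (gy : EuclideanSpace ℝ (Fin dx) → EuclideanSpace ℝ (Fin dy) → EuclideanSpace ℝ (Fin dy))
    (hgx : ∀ x y, gx x y = gradient (fun x' => f x' y) x)
    (hgy : ∀ x y, gy x y = gradient (fun y' => f x y') y)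
    (hmono : ∀ x₀ y₀ x₁ y₁,
      ⟪gx x₁ y₁ - gx x₀ y₀, x₁ - x₀⟫ - ⟪gy x₁ y₁ - gy x₀ y₀, y₁ - y₀⟫
        ≥ μ * (‖x₁ - x₀‖ ^ 2 + ‖y₁ - y₀‖ ^ 2))
    (hlip : ∀ x₀ y₀ x₁ y₁,
      Real.sqrt (‖gx x₁ y₁ - gx x₀ y₀‖ ^ 2 + ‖gy x₁ y₁ - gy x₀ y₀‖ ^ 2)
        ≤ L * Real.sqrt (‖x₁ - x₀‖ ^ 2 + ‖y₁ - y₀‖ ^ 2))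
    (α : ℝ) (hα₀ : 0 ≤ α) (hα₁ : α < μ / L)
    (gtx : EuclideanSpace ℝ (Fin dx) → EuclideanSpace ℝ (Fin dy) → EuclideanSpace ℝ (Fin dx))
    (gty : EuclideanSpace ℝ (Fin dx) → EuclideanSpace ℝ (Fin dy) → EuclideanSpace ℝ (Fin dy))
    (hrel : ∀ x y, ‖gtx x y - gx x y‖ ^ 2 + ‖gty x y - gy x y‖ ^ 2
      ≤ α ^ 2 * (‖gx x y‖ ^ 2 + ‖gy x y‖ ^ 2))
    (xstar : EuclideanSpace ℝ (Fin dx)) (ystar : EuclideanSpace ℝ (Fin dy))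
    (hstar : gx xstar ystar = 0 ∧ gy xstar ystar = 0)
    (η : ℝ) (hη : η = (μ - α * L) / ((1 + α) ^ 2 * L ^ 2))
    (x : ℕ → EuclideanSpace ℝ (Fin dx)) (y : ℕ → EuclideanSpace ℝ (Fin dy))
    (hxit : ∀ k, x (k + 1) = x k - η • gtx (x k) (y k))
    (hyit : ∀ k, y (k + 1) = y k + η • gty (x k) (y k)) :
    ∀ N : ℕ, ‖x N - xstar‖ ^ 2 + ‖y N - ystar‖ ^ 2
      ≤ (1 - (μ - α * L) ^ 2 / ((1 + α) ^ 2 * L ^ 2)) ^ N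
        * (‖x 0 - xstar‖ ^ 2 + ‖y 0 - ystar‖ ^ 2) := by
  have hL : 0 < L := lt_of_lt_of_le hμ hμL
  have hαL : α * L < μ := (lt_div_iff₀ hL).mp hα₁
  have hm : 0 < μ - α * L := by linarith
  set c : ℝ := 1 - (μ - α * L) ^ 2 / ((1 + α) ^ 2 * L ^ 2) with hc
  have hK : (0:ℝ) < (1 + α) ^ 2 * L ^ 2 := by positivity
  have hcnn : 0 ≤ c := by
    rw [hc, sub_nonneg]
    rw [div_le_one hK]
    nlinarith
  have step : ∀ k, ‖x (k+1) - xstar‖ ^ 2 + ‖y (k+1) - ystar‖ ^ 2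
      ≤ c * (‖x k - xstar‖ ^ 2 + ‖y k - ystar‖ ^ 2) := by
    intro k
    have hxe : x (k+1) - xstar = (x k - xstar) - η • gtx (x k) (y k) := by
      rw [hxit]; abel
    have hye : y (k+1) - ystar = (y k - ystar) + η • gty (x k) (y k) := by
      rw [hyit]; abel
    rw [hxe, hye, hc]
    have hmono' := hmono xstar ystar (x k) (y k)
    rw [hstar.1, hstar.2, sub_zero, sub_zero] at hmono'
    have hlip' := hlip xstar ystar (x k) (y k)
    rw [hstar.1, hstar.2, sub_zero, sub_zero] at hlip'
    have hlipS : ‖gx (x k) (y k)‖ ^ 2 + ‖gy (x k) (y k)‖ ^ 2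
        ≤ L ^ 2 * (‖x k - xstar‖ ^ 2 + ‖y k - ystar‖ ^ 2) := by
      have hSnn : (0:ℝ) ≤ ‖gx (x k) (y k)‖ ^ 2 + ‖gy (x k) (y k)‖ ^ 2 := by positivity
      have hEnn : (0:ℝ) ≤ ‖x k - xstar‖ ^ 2 + ‖y k - ystar‖ ^ 2 := by positivity
      have h2 := mul_le_mul hlip' hlip' (Real.sqrt_nonneg _) (by positivity)
      rw [Real.mul_self_sqrt hSnn] at h2
      have h3 : L * Real.sqrt (‖x k - xstar‖ ^ 2 + ‖y k - ystar‖ ^ 2)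
          * (L * Real.sqrt (‖x k - xstar‖ ^ 2 + ‖y k - ystar‖ ^ 2))
          = L ^ 2 * (‖x k - xstar‖ ^ 2 + ‖y k - ystar‖ ^ 2) := by
        rw [show L * Real.sqrt (‖x k - xstar‖ ^ 2 + ‖y k - ystar‖ ^ 2)
          * (L * Real.sqrt (‖x k - xstar‖ ^ 2 + ‖y k - ystar‖ ^ 2))
          = L ^ 2 * (Real.sqrt (‖x k - xstar‖ ^ 2 + ‖y k - ystar‖ ^ 2)
            * Real.sqrt (‖x k - xstar‖ ^ 2 + ‖y k - ystar‖ ^ 2)) by ring,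
          Real.mul_self_sqrt hEnn]
      rw [h3] at h2
      exact h2
    exact key_step μ L α η hμ hL hα₀ hαL hη (x k - xstar) (y k - ystar)
      (gx (x k) (y k)) (gtx (x k) (y k)) (gy (x k) (y k)) (gty (x k) (y k))
      hmono' hlipS (hrel (x k) (y k))
  intro N
  induction N with
  | zero => simp
  | succ n ih =>
    calc ‖x (n+1) - xstar‖ ^ 2 + ‖y (n+1) - ystar‖ ^ 2
        ≤ c * (‖x n - xstar‖ ^ 2 + ‖y n - ystar‖ ^ 2) := step n
      _ ≤ c * (c ^ n * (‖x 0 - xstar‖ ^ 2 + ‖y 0 - ystar‖ ^ 2)) :=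
          mul_le_mul_of_nonneg_left ih hcnn
      _ = c ^ (n+1) * (‖x 0 - xstar‖ ^ 2 + ‖y 0 - ystar‖ ^ 2) := by ring
end

section
/- Let ε > 0 and consider F(x, y) = (ε/2)x² + xy − (ε/2)y² on ℝ × ℝ, with gradient operator g(x, y) = (εx + y, −x + εy). Then: (i) g is μ-strongly monotone and L-Lipschitz with μ = ε and L = √(1 + ε²); (ii) the oracle g̃(x, y) = (y, −x) satisfies ‖g̃(x, y) − g(x, y)‖ ≤ (μ/L)·‖g(x, y)‖ for all (x, y), i.e. it is an inexact gradient oracle with relative error α = μ/L; and (iii) for every step size η > 0, the Inexact Sim-GDA iterates x^{k+1} = x^k − η·y^k, y^{k+1} = y^k + η·x^k satisfy (x^{k+1})² + (y^{k+1})² = (1 + η²)·((x^k)² + (y^k)²); in particular, for any starting point other than the unique saddle point (0,0), the squared distance to the saddle point strictly increases at every iteration. -/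
/-- Theorem (tightness of the `α = μ/L` threshold for Inexact Sim-GDA,
worst-case example `F(x, y) = (ε/2)x² + xy − (ε/2)y²` with gradient operator
`g(x, y) = (εx + y, −x + εy)` and disturbed oracle `g̃(x, y) = (y, −x)`):
(i) `g` is `ε`-strongly monotone and `√(1 + ε²)`-Lipschitz;
(ii) the oracle has relative error `α = ε/√(1 + ε²) = μ/L`;
(iii) Inexact Sim-GDA with any step `η > 0` satisfies
`(x^{k+1})² + (y^{k+1})² = (1 + η²)((x^k)² + (y^k)²)`, so the squared distance
to the saddle point `(0, 0)` strictly increases from any other starting point.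
All quantities on `ℝ²` are written componentwise (Euclidean norms). -/
theorem stmt_12 (ε : ℝ) (hε : 0 < ε) :
    (∀ x₀ y₀ x₁ y₁ : ℝ,
      ((ε * x₁ + y₁) - (ε * x₀ + y₀)) * (x₁ - x₀)
          + ((-x₁ + ε * y₁) - (-x₀ + ε * y₀)) * (y₁ - y₀)
        ≥ ε * ((x₁ - x₀) ^ 2 + (y₁ - y₀) ^ 2) ∧
      Real.sqrt (((ε * x₁ + y₁) - (ε * x₀ + y₀)) ^ 2
          + ((-x₁ + ε * y₁) - (-x₀ + ε * y₀)) ^ 2)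
        ≤ Real.sqrt (1 + ε ^ 2) * Real.sqrt ((x₁ - x₀) ^ 2 + (y₁ - y₀) ^ 2)) ∧
    (∀ x y : ℝ,
      Real.sqrt ((y - (ε * x + y)) ^ 2 + ((-x) - (-x + ε * y)) ^ 2)
        ≤ ε / Real.sqrt (1 + ε ^ 2)
          * Real.sqrt ((ε * x + y) ^ 2 + (-x + ε * y) ^ 2)) ∧
    (∀ η : ℝ, 0 < η → ∀ x y : ℕ → ℝ,
      (∀ k, x (k + 1) = x k - η * y k) →
      (∀ k, y (k + 1) = y k + η * x k) →
      (∀ k, (x (k + 1)) ^ 2 + (y (k + 1)) ^ 2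
          = (1 + η ^ 2) * ((x k) ^ 2 + (y k) ^ 2)) ∧
      ((x 0, y 0) ≠ (0, 0) →
        ∀ k, (x k) ^ 2 + (y k) ^ 2 < (x (k + 1)) ^ 2 + (y (k + 1)) ^ 2)) := by
  have h1 : (0:ℝ) < 1 + ε ^ 2 := by positivity
  refine ⟨fun x₀ y₀ x₁ y₁ => ⟨by nlinarith [sq_nonneg (x₁-x₀), sq_nonneg (y₁-y₀)], ?_⟩,
    fun x y => ?_, fun η hη x y hx hy => ?_⟩
  · have e : ((ε * x₁ + y₁) - (ε * x₀ + y₀)) ^ 2 + ((-x₁ + ε * y₁) - (-x₀ + ε * y₀)) ^ 2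
        = (1 + ε ^ 2) * ((x₁ - x₀) ^ 2 + (y₁ - y₀) ^ 2) := by ring
    rw [e, Real.sqrt_mul h1.le]
  · have e : (y - (ε * x + y)) ^ 2 + ((-x) - (-x + ε * y)) ^ 2
        = ε ^ 2 * (x ^ 2 + y ^ 2) := by ring
    have e2 : (ε * x + y) ^ 2 + (-x + ε * y) ^ 2 = (1 + ε ^ 2) * (x ^ 2 + y ^ 2) := by ring
    rw [e, e2, Real.sqrt_mul (by positivity), Real.sqrt_mul h1.le, Real.sqrt_sq hε.le]
    have hne : Real.sqrt (1 + ε ^ 2) ≠ 0 := by positivity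
    rw [div_mul_eq_mul_div, mul_comm (Real.sqrt (1 + ε ^ 2)) (Real.sqrt (x ^ 2 + y ^ 2)),
      ← mul_assoc, mul_div_assoc, div_self hne, mul_one]
  · have key : ∀ k, (x (k + 1)) ^ 2 + (y (k + 1)) ^ 2
        = (1 + η ^ 2) * ((x k) ^ 2 + (y k) ^ 2) := by
      intro k; rw [hx k, hy k]; ring
    refine ⟨key, fun h0 k => ?_⟩
    have hpos : ∀ k, 0 < (x k) ^ 2 + (y k) ^ 2 := by
      intro k
      induction k with
      | zero =>
        rcases (not_and_or.mp (by simpa [Prod.ext_iff] using h0)) with h | h <;> positivity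
      | succ n ih => rw [key n]; positivity
    rw [key k]
    nlinarith [mul_pos (pow_pos hη 2) (hpos k)]
end

section
/- Let f : ℝ^{d_x} × ℝ^{d_y} → ℝ be differentiable with g_z μ-strongly monotone and L-Lipschitz (0 < μ ≤ L), let α satisfy 0 ≤ α < μ/(√2·L), let g̃_x, g̃_y be inexact partial gradients with relative error α, and let z* satisfy g_z(z*) = 0. Then there exist η > 0 and ρ < 1 (with ρ ≥ 0) such that ρ = 1 − 2(μ − √2·αL)·η + 4(1 + α)²·L²·η² + (1 + α)⁴·L⁴·η⁴ < 1, and consequently the Inexact Alt-GDA iterates with step η satisfy ‖z^{k+1} − z*‖² ≤ ρ·‖z^k − z*‖² for every k; in particular Inexact Alt-GDA converges linearly to z*. -/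
open scoped RealInnerProductSpace

private lemma le_of_sq_le' {p c : ℝ} (hp : 0 ≤ p) (hc : 0 ≤ c) (h : p^2 ≤ c^2) : p ≤ c := by
  nlinarith

private lemma sqrt_pair_le {p q c : ℝ} (hp : 0 ≤ p) (hq : 0 ≤ q)
    (h : Real.sqrt (p^2 + q^2) ≤ c) : p ≤ c ∧ q ≤ c ∧ p^2 + q^2 ≤ c^2 := by
  have h0 : (0:ℝ) ≤ p^2 + q^2 := by positivity
  have hc : 0 ≤ c := le_trans (Real.sqrt_nonneg _) h
  have hsq : p^2 + q^2 ≤ c^2 := by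
    have h1 := Real.sq_sqrt h0
    have h2 := Real.sqrt_nonneg (p^2+q^2)
    nlinarith
  exact ⟨le_of_sq_le' hp hc (by nlinarith), le_of_sq_le' hq hc (by nlinarith), hsq⟩


private lemma sq_mono' {p c : ℝ} (hp : 0 ≤ p) (h : p ≤ c) : p^2 ≤ c^2 := by nlinarith

private lemma lemA {X A B r t : ℝ} (hXle : X ≤ A + t) (hX0 : 0 ≤ X) (hA : A ≤ r)
    (ht : 0 ≤ t) (h2 : r^2 = A^2 + B^2) : X^2 + B^2 ≤ (r + t)^2 := by
  nlinarith [mul_le_mul_of_nonneg_left hA ht]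

private lemma lemB {S1 S2 T1 T2 T3 A B r s2 α L η μ : ℝ}
    (hmono : S1 - S2 ≥ μ*(A^2+B^2))
    (t1 : T1 ≥ -(A*(α*(L*r))))
    (t2 : T2 ≤ B*(L*(η*((1+α)*(L*r)))))
    (t3 : T3 ≤ B*(α*(L*r + L*(η*((1+α)*(L*r))))))
    (hab : A + B ≤ s2*r) (hB : B ≤ r) (hr2 : r^2 = A^2+B^2)
    (hα : 0 ≤ α) (hL : 0 ≤ L) (hr : 0 ≤ r) (hη : 0 ≤ η) :
    (S1 + T1) - (S2 + T2 + T3) ≥ (μ - s2*α*L)*r^2 - ((1+α)*L)^2*η*r^2 := by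
  have u1 : α*(L*r)*(A+B) ≤ α*(L*r)*(s2*r) :=
    mul_le_mul_of_nonneg_left hab (mul_nonneg hα (mul_nonneg hL hr))
  have hcnn : (0:ℝ) ≤ (1+α)^2*L^2*η*r := by
    have h1 : (0:ℝ) ≤ (1+α)^2*L^2 := by positivity
    exact mul_nonneg (mul_nonneg h1 hη) hr
  have u2 : B*((1+α)^2*L^2*η*r) ≤ r*((1+α)^2*L^2*η*r) :=
    mul_le_mul_of_nonneg_right hB hcnn
  have e : μ*(A^2+B^2) = μ*r^2 := by rw [hr2]
  linarith [hmono, t1, t2, t3, u1, u2, e]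

private lemma lemC {p q q' c D : ℝ} (h1 : q' ≤ q + D) (h5 : 0 ≤ q')
    (h2 : p^2+q^2 ≤ c^2) (h3 : q ≤ c) (h4 : 0 ≤ D) (h6 : 0 ≤ q) :
    p^2 + q'^2 ≤ (c + D)^2 := by
  nlinarith [mul_le_mul_of_nonneg_right h3 h4, mul_self_le_mul_self h5 h1]

private lemma lemD {U V p q' c1 c2 α : ℝ} (hU : U ≤ p + α*c1) (hV : V ≤ q' + α*c2)
    (hU0 : 0 ≤ U) (hV0 : 0 ≤ V) (hpc : p ≤ c1) (hqc : q' ≤ c2)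
    (hpq : p^2 + q'^2 ≤ c2^2) (hα : 0 ≤ α) (hc1 : 0 ≤ c1) (hc2 : 0 ≤ c2)
    (hp0 : 0 ≤ p) (hq0 : 0 ≤ q') :
    U^2 + V^2 ≤ c2^2 + (2*α+α^2)*(c1^2 + c2^2) := by
  have w1 : U*U ≤ (p + α*c1)*(p + α*c1) :=
    mul_self_le_mul_self hU0 hU
  have w2 : V*V ≤ (q' + α*c2)*(q' + α*c2) :=
    mul_self_le_mul_self hV0 hV
  have w3 : α*c1*p ≤ α*c1*c1 :=
    mul_le_mul_of_nonneg_left hpc (mul_nonneg hα hc1)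
  have w4 : α*c2*q' ≤ α*c2*c2 :=
    mul_le_mul_of_nonneg_left hqc (mul_nonneg hα hc2)
  nlinarith [w1, w2, w3, w4, hpq]

private lemma lemAB {A B r s2 : ℝ} (hA : 0 ≤ A) (hB : 0 ≤ B) (hr : 0 ≤ r)
    (hs2 : 0 ≤ s2) (h2 : s2^2 = 2) (hr2 : r^2 = A^2+B^2) : A + B ≤ s2*r := by
  nlinarith [sq_nonneg (A-B), mul_nonneg hs2 hr]

private lemma lemE {IAU IBV U V A B r m α L η : ℝ}
    (hT : IAU - IBV ≥ m*r^2 - ((1+α)*L)^2*η*r^2)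
    (hUV : U^2 + V^2 ≤ (L*r + L*(η*((1+α)*(L*r))))^2
        + (2*α+α^2)*((L*r)^2 + (L*r + L*(η*((1+α)*(L*r))))^2))
    (hr2 : r^2 = A^2+B^2) (hη2 : η*(2*(1+α)^3*L) ≤ 1)
    (hη : 0 ≤ η) (hr : 0 ≤ r) :
    A^2 - 2*(η*IAU) + η^2*U^2 + (B^2 + 2*(η*IBV) + η^2*V^2)
      ≤ (1 - 2*m*η + 4*(1+α)^2*L^2*η^2 + (1+α)^4*L^4*η^4)*(A^2+B^2) := by
  have hρfac : 0 ≤ η^2*L^2*r^2*(1 - η*(2*(1+α)^3*L)) :=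
    mul_nonneg (by positivity) (by linarith)
  have w1 := mul_le_mul_of_nonneg_left hT (by linarith : (0:ℝ) ≤ 2*η)
  have w2 := mul_le_mul_of_nonneg_left hUV (sq_nonneg η)
  have e2 : (1 - 2*m*η + 4*(1+α)^2*L^2*η^2 + (1+α)^4*L^4*η^4)*(A^2+B^2)
      = (1 - 2*m*η + 4*(1+α)^2*L^2*η^2 + (1+α)^4*L^4*η^4)*r^2 := by rw [hr2]
  linarith [w1, w2, hρfac, hr2, e2]

set_option maxHeartbeats 1600000 in
/-- Theorem 4 (linear convergence of Inexact Alt-GDA for strongly monotone,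
Lipschitz saddle-point operators when `α < μ/(√2·L)`): there exist a step size
`η > 0` and a contraction factor `ρ ∈ [0, 1)` equal to
`1 − 2(μ − √2·αL)η + 4(1 + α)²L²η² + (1 + α)⁴L⁴η⁴` such that every run of
Inexact Alt-GDA with step `η` contracts by `ρ` at each iteration. The combined
variable `z = (x, y)` is treated componentwise, with `‖z‖² = ‖x‖² + ‖y‖²`. -/
theorem stmt_14 {dx dy : ℕ} (μ L : ℝ) (hμ : 0 < μ) (hμL : μ ≤ L)
    (f : EuclideanSpace ℝ (Fin dx) → EuclideanSpace ℝ (Fin dy) → ℝ)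
    (hf : Differentiable ℝ (fun p : EuclideanSpace ℝ (Fin dx) × EuclideanSpace ℝ (Fin dy) => f p.1 p.2))
    (gx : EuclideanSpace ℝ (Fin dx) → EuclideanSpace ℝ (Fin dy) → EuclideanSpace ℝ (Fin dx))
    (gy : EuclideanSpace ℝ (Fin dx) → EuclideanSpace ℝ (Fin dy) → EuclideanSpace ℝ (Fin dy))
    (hgx : ∀ x y, gx x y = gradient (fun x' => f x' y) x)
    (hgy : ∀ x y, gy x y = gradient (fun y' => f x y') y)
    (hmono : ∀ x₀ y₀ x₁ y₁,
      ⟪gx x₁ y₁ - gx x₀ y₀, x₁ - x₀⟫ - ⟪gy x₁ y₁ - gy x₀ y₀, y₁ - y₀⟫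
        ≥ μ * (‖x₁ - x₀‖ ^ 2 + ‖y₁ - y₀‖ ^ 2))
    (hlip : ∀ x₀ y₀ x₁ y₁,
      Real.sqrt (‖gx x₁ y₁ - gx x₀ y₀‖ ^ 2 + ‖gy x₁ y₁ - gy x₀ y₀‖ ^ 2)
        ≤ L * Real.sqrt (‖x₁ - x₀‖ ^ 2 + ‖y₁ - y₀‖ ^ 2))
    (α : ℝ) (hα₀ : 0 ≤ α) (hα₁ : α < μ / (Real.sqrt 2 * L))
    (gtx : EuclideanSpace ℝ (Fin dx) → EuclideanSpace ℝ (Fin dy) → EuclideanSpace ℝ (Fin dx))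
    (gty : EuclideanSpace ℝ (Fin dx) → EuclideanSpace ℝ (Fin dy) → EuclideanSpace ℝ (Fin dy))
    (hrel : ∀ x y, ‖gtx x y - gx x y‖ ^ 2 + ‖gty x y - gy x y‖ ^ 2
      ≤ α ^ 2 * (‖gx x y‖ ^ 2 + ‖gy x y‖ ^ 2))
    (xstar : EuclideanSpace ℝ (Fin dx)) (ystar : EuclideanSpace ℝ (Fin dy))
    (hstar : gx xstar ystar = 0 ∧ gy xstar ystar = 0) :
    ∃ η > 0, ∃ ρ : ℝ, 0 ≤ ρ ∧ ρ < 1 ∧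
      ρ = 1 - 2 * (μ - Real.sqrt 2 * α * L) * η + 4 * (1 + α) ^ 2 * L ^ 2 * η ^ 2
            + (1 + α) ^ 4 * L ^ 4 * η ^ 4 ∧
      ∀ (x : ℕ → EuclideanSpace ℝ (Fin dx)) (y : ℕ → EuclideanSpace ℝ (Fin dy)),
        (∀ k, x (k + 1) = x k - η • gtx (x k) (y k)) →
        (∀ k, y (k + 1) = y k + η • gty (x (k + 1)) (y k)) →
        ∀ k, ‖x (k + 1) - xstar‖ ^ 2 + ‖y (k + 1) - ystar‖ ^ 2
          ≤ ρ * (‖x k - xstar‖ ^ 2 + ‖y k - ystar‖ ^ 2) := by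
  obtain ⟨hgx0, hgy0⟩ := hstar
  have hL : 0 < L := lt_of_lt_of_le hμ hμL
  have h1α : (0:ℝ) < 1 + α := by linarith
  have hs2 : (0:ℝ) < Real.sqrt 2 := Real.sqrt_pos.mpr (by norm_num)
  have hs2sq : Real.sqrt 2 ^ 2 = 2 := Real.sq_sqrt (by norm_num)
  have hm : 0 < μ - Real.sqrt 2 * α * L := by
    have h2L : 0 < Real.sqrt 2 * L := mul_pos hs2 hL
    have h := (lt_div_iff₀ h2L).mp hα₁
    nlinarith
  set m := μ - Real.sqrt 2 * α * L with hm_def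
  set η := min (m / (4 * ((1+α)*L)^2)) (1 / (2 * (1+α)^3 * L)) with hη_def
  have hK2 : (0:ℝ) < 4 * ((1+α)*L)^2 := by positivity
  have hc3 : (0:ℝ) < 2 * (1+α)^3 * L := by positivity
  have hη0 : 0 < η := lt_min (div_pos hm hK2) (by positivity)
  have hη1 : η * (4 * ((1+α)*L)^2) ≤ m := by
    have h := min_le_left (m / (4 * ((1+α)*L)^2)) (1 / (2 * (1+α)^3 * L))
    rw [← hη_def] at h
    exact (le_div_iff₀ hK2).mp h
  have hη2 : η * (2 * (1+α)^3 * L) ≤ 1 := by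
    have h := min_le_right (m / (4 * ((1+α)*L)^2)) (1 / (2 * (1+α)^3 * L))
    rw [← hη_def] at h
    exact (le_div_iff₀ hc3).mp h
  clear_value m η
  have haux : 0 ≤ η * L * ((1+α)*(2*α+α^2)) :=
    mul_nonneg (mul_nonneg hη0.le hL.le) (by nlinarith)
  have hηK : η * (2*(1+α)*L) ≤ 1 := by nlinarith [hη2, haux]
  have hmK : m ≤ (1+α)*L := by
    have h1 : 0 ≤ Real.sqrt 2 * α * L :=
      mul_nonneg (mul_nonneg hs2.le hα₀) hL.le
    have h2 : 0 ≤ α * L := mul_nonneg hα₀ hL.le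
    rw [hm_def]; nlinarith
  refine ⟨η, hη0, 1 - 2 * m * η + 4 * (1 + α) ^ 2 * L ^ 2 * η ^ 2
      + (1 + α) ^ 4 * L ^ 4 * η ^ 4, ?_, ?_, rfl, ?_⟩
  · -- 0 ≤ ρ
    have q1 : (0:ℝ) ≤ 4*(1+α)^2*L^2*η^2 := by positivity
    have q2 : (0:ℝ) ≤ (1+α)^4*L^4*η^4 := by positivity
    have h3 := mul_le_mul_of_nonneg_right hmK hη0.le
    nlinarith [hηK]
  · -- ρ < 1
    have hA' : 4*(1+α)^2*L^2*η^2 ≤ m*η := by nlinarith [mul_le_mul_of_nonneg_right hη1 hη0.le]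
    have hs_nn : (0:ℝ) ≤ η * (2*(1+α)*L) :=
      mul_nonneg hη0.le (by positivity)
    have hsq : (η * (2*(1+α)*L))^2 ≤ 1 := by nlinarith [hηK, hs_nn]
    have c1 : (1+α)^2*L^2*η^2 ≤ m*η/4 := by linarith
    have c2 : (1+α)^2*L^2*η^2 ≤ 1/4 := by nlinarith [hsq]
    have c0 : (0:ℝ) ≤ (1+α)^2*L^2*η^2 := by positivity
    have cb : (0:ℝ) ≤ m*η/4 := by positivity
    have hquart : (1+α)^4*L^4*η^4 ≤ (m*η/4)*(1/4) := by
      nlinarith [mul_le_mul c1 c2 c0 cb]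
    have hmη : 0 < m*η := mul_pos hm hη0
    nlinarith
  · -- the contraction estimate
    intro x y hx hy k
    clear hf hgx hgy hα₁ hμ hμL hK2 hc3 haux hmK hm hη1 hηK hη_def
    have hxk := hx k
    have hyk := hy k
    clear hx hy
    set a := x k - xstar with ha_def
    set b := y k - ystar with hb_def
    set u := gtx (x k) (y k) with hu_def
    set v := gty (x (k+1)) (y k) with hv_def
    set r := Real.sqrt (‖a‖^2 + ‖b‖^2) with hr_def
    have hr0 : 0 ≤ r := by rw [hr_def]; exact Real.sqrt_nonneg _
    have hr2 : r^2 = ‖a‖^2 + ‖b‖^2 := by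
      rw [hr_def]; exact Real.sq_sqrt (by positivity)
    clear_value a b u v r
    have hnorma : ‖a‖ ≤ r := le_of_sq_le' (norm_nonneg _) hr0 (by nlinarith [sq_nonneg ‖b‖])
    have hnormb : ‖b‖ ≤ r := le_of_sq_le' (norm_nonneg _) hr0 (by nlinarith [sq_nonneg ‖a‖])
    -- gradient norm bound at (x k, y k)
    have hlip0 := hlip xstar ystar (x k) (y k)
    rw [hgx0, hgy0, sub_zero, sub_zero, ← ha_def, ← hb_def, ← hr_def] at hlip0
    obtain ⟨hPr, hQr, hsum⟩ := sqrt_pair_le (norm_nonneg _) (norm_nonneg _) hlip0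
    clear hlip0
    -- inexactness at (x k, y k)
    have hrel0 := hrel (x k) (y k)
    rw [← hu_def] at hrel0
    have hLr0 : (0:ℝ) ≤ L * r := mul_nonneg hL.le hr0
    have hex : ‖u - gx (x k) (y k)‖ ≤ α * (L*r) := by
      refine le_of_sq_le' (norm_nonneg _) (by positivity) ?_
      nlinarith [mul_le_mul_of_nonneg_left hsum (sq_nonneg α),
        sq_nonneg ‖gty (x k) (y k) - gy (x k) (y k)‖, hrel0]
    clear hrel0
    have hU : ‖u‖ ≤ ‖gx (x k) (y k)‖ + α*(L*r) := by
      have e : gx (x k) (y k) + (u - gx (x k) (y k)) = u := by abel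
      have h2 : ‖u‖ ≤ ‖gx (x k) (y k)‖ + ‖u - gx (x k) (y k)‖ := by
        calc ‖u‖ = ‖gx (x k) (y k) + (u - gx (x k) (y k))‖ := by rw [e]
          _ ≤ _ := norm_add_le _ _
      linarith
    have hU' : ‖u‖ ≤ (1+α)*(L*r) := by linarith
    -- update rewriting
    have hx'_eq : x (k+1) - xstar = a - η • u := by
      rw [hxk, ha_def]; abel
    have hy'_eq : y (k+1) - ystar = b + η • v := by
      rw [hyk, hb_def]; abel
    have hnu : ‖η • u‖ = η * ‖u‖ := by
      rw [norm_smul, Real.norm_eq_abs, abs_of_pos hη0]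
    have hnv : ‖η • v‖ = η * ‖v‖ := by
      rw [norm_smul, Real.norm_eq_abs, abs_of_pos hη0]
    have hηU : η * ‖u‖ ≤ η*((1+α)*(L*r)) := mul_le_mul_of_nonneg_left hU' hη0.le
    have hx'r : ‖x (k+1) - xstar‖ ≤ ‖a‖ + η*((1+α)*(L*r)) := by
      rw [hx'_eq]
      calc ‖a - η•u‖ ≤ ‖a‖ + ‖η•u‖ := norm_sub_le _ _
        _ = ‖a‖ + η*‖u‖ := by rw [hnu]
        _ ≤ _ := by linarith
    have hDnn : (0:ℝ) ≤ η*((1+α)*(L*r)) :=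
      mul_nonneg hη0.le (mul_nonneg h1α.le hLr0)
    have hD' : ‖x (k+1) - xstar‖^2 + ‖b‖^2 ≤ (r + η*((1+α)*(L*r)))^2 :=
      lemA hx'r (norm_nonneg _) hnorma hDnn hr2
    -- gradient norm bound at (x (k+1), y k)
    have hrt : (0:ℝ) ≤ r + η*((1+α)*(L*r)) := by linarith
    have hlip1 := hlip xstar ystar (x (k+1)) (y k)
    rw [hgx0, hgy0, sub_zero, sub_zero, ← hb_def] at hlip1
    have hsq' : Real.sqrt (‖x (k+1) - xstar‖^2 + ‖b‖^2) ≤ r + η*((1+α)*(L*r)) := by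
      calc Real.sqrt (‖x (k+1) - xstar‖^2 + ‖b‖^2)
          ≤ Real.sqrt ((r + η*((1+α)*(L*r)))^2) := Real.sqrt_le_sqrt hD'
        _ = r + η*((1+α)*(L*r)) := Real.sqrt_sq hrt
    have hlip1' : Real.sqrt (‖gx (x (k+1)) (y k)‖^2 + ‖gy (x (k+1)) (y k)‖^2)
        ≤ L*(r + η*((1+α)*(L*r))) :=
      le_trans hlip1 (mul_le_mul_of_nonneg_left hsq' hL.le)
    clear hlip1 hsq' hD' hx'r
    obtain ⟨hP'r, hQ'r, hsum'⟩ := sqrt_pair_le (norm_nonneg _) (norm_nonneg _) hlip1'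
    clear hlip1'
    have hc2nn : (0:ℝ) ≤ L*(r + η*((1+α)*(L*r))) := mul_nonneg hL.le hrt
    -- inexactness at (x (k+1), y k)
    have hrel1 := hrel (x (k+1)) (y k)
    rw [← hv_def] at hrel1
    have hey : ‖v - gy (x (k+1)) (y k)‖ ≤ α * (L*(r + η*((1+α)*(L*r)))) := by
      refine le_of_sq_le' (norm_nonneg _) (mul_nonneg hα₀ hc2nn) ?_
      nlinarith [mul_le_mul_of_nonneg_left hsum' (sq_nonneg α),
        sq_nonneg ‖gtx (x (k+1)) (y k) - gx (x (k+1)) (y k)‖, hrel1]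
    clear hrel1
    -- Lipschitz between (x k, y k) and (x (k+1), y k)
    have hxdiff : x (k+1) - x k = -(η • u) := by rw [hxk]; abel
    have hlip2 := hlip (x k) (y k) (x (k+1)) (y k)
    have h0y : ‖y k - y k‖^2 = (0:ℝ) := by simp
    rw [hxdiff, h0y, add_zero, norm_neg, hnu,
      Real.sqrt_sq (mul_nonneg hη0.le (norm_nonneg u))] at hlip2
    have hlip2' : Real.sqrt (‖gx (x (k+1)) (y k) - gx (x k) (y k)‖^2
        + ‖gy (x (k+1)) (y k) - gy (x k) (y k)‖^2) ≤ L*(η*((1+α)*(L*r))) :=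
      le_trans hlip2 (mul_le_mul_of_nonneg_left hηU hL.le)
    clear hlip2
    obtain ⟨-, hδ, -⟩ := sqrt_pair_le (norm_nonneg _) (norm_nonneg _) hlip2'
    clear hlip2'
    -- monotonicity
    have hM := hmono xstar ystar (x k) (y k)
    rw [hgx0, hgy0, sub_zero, sub_zero, ← ha_def, ← hb_def] at hM
    have hM' : ⟪a, gx (x k) (y k)⟫ - ⟪b, gy (x k) (y k)⟫ ≥ μ * (‖a‖^2 + ‖b‖^2) := by
      have e1 : ⟪a, gx (x k) (y k)⟫ = ⟪gx (x k) (y k), a⟫ := real_inner_comm _ _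
      have e2 : ⟪b, gy (x k) (y k)⟫ = ⟪gy (x k) (y k), b⟫ := real_inner_comm _ _
      rw [e1, e2]; exact hM
    clear hM hmono hlip hrel
    -- inner product decompositions
    have hiu : ⟪a, u⟫ = ⟪a, gx (x k) (y k)⟫ + ⟪a, u - gx (x k) (y k)⟫ := by
      rw [← inner_add_right]
      congr 1
      abel
    have hiv : ⟪b, v⟫ = ⟪b, gy (x k) (y k)⟫
        + ⟪b, gy (x (k+1)) (y k) - gy (x k) (y k)⟫
        + ⟪b, v - gy (x (k+1)) (y k)⟫ := by
      rw [← inner_add_right, ← inner_add_right]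
      congr 1
      abel
    -- Cauchy–Schwarz pieces
    have t1 : ⟪a, u - gx (x k) (y k)⟫ ≥ -(‖a‖ * (α*(L*r))) := by
      have h1 := abs_real_inner_le_norm a (u - gx (x k) (y k))
      have h2 := mul_le_mul_of_nonneg_left hex (norm_nonneg a)
      have h3 := neg_abs_le ⟪a, u - gx (x k) (y k)⟫
      linarith
    have t2 : ⟪b, gy (x (k+1)) (y k) - gy (x k) (y k)⟫ ≤ ‖b‖ * (L*(η*((1+α)*(L*r)))) := by
      have h1 := abs_real_inner_le_norm b (gy (x (k+1)) (y k) - gy (x k) (y k))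
      have h2 := mul_le_mul_of_nonneg_left hδ (norm_nonneg b)
      have h3 := le_abs_self ⟪b, gy (x (k+1)) (y k) - gy (x k) (y k)⟫
      linarith
    have t3 : ⟪b, v - gy (x (k+1)) (y k)⟫
        ≤ ‖b‖ * (α*(L*r + L*(η*((1+α)*(L*r))))) := by
      have h1 := abs_real_inner_le_norm b (v - gy (x (k+1)) (y k))
      have h2 := mul_le_mul_of_nonneg_left hey (norm_nonneg b)
      have h3 := le_abs_self ⟪b, v - gy (x (k+1)) (y k)⟫
      have h4 : ‖b‖ * (α * (L*(r + η*((1+α)*(L*r)))))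
          = ‖b‖ * (α*(L*r + L*(η*((1+α)*(L*r))))) := by ring
      linarith [h4.ge, h4.le]
    have hab : ‖a‖ + ‖b‖ ≤ Real.sqrt 2 * r :=
      lemAB (norm_nonneg a) (norm_nonneg b) hr0 hs2.le hs2sq hr2
    have hT : ⟪a, u⟫ - ⟪b, v⟫ ≥ m*r^2 - ((1+α)*L)^2*η*r^2 := by
      have h := lemB hM' t1 t2 t3 hab hnormb hr2 hα₀ hL.le hr0 hη0.le
      rw [hm_def]
      linarith [hiu, hiv, h]
    -- squared-norm bound
    have hq'tri : ‖gy (x (k+1)) (y k)‖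
        ≤ ‖gy (x k) (y k)‖ + L*(η*((1+α)*(L*r))) := by
      have e : gy (x k) (y k) + (gy (x (k+1)) (y k) - gy (x k) (y k))
          = gy (x (k+1)) (y k) := by abel
      have h2 : ‖gy (x (k+1)) (y k)‖
          ≤ ‖gy (x k) (y k)‖ + ‖gy (x (k+1)) (y k) - gy (x k) (y k)‖ := by
        calc ‖gy (x (k+1)) (y k)‖
            = ‖gy (x k) (y k) + (gy (x (k+1)) (y k) - gy (x k) (y k))‖ := by rw [e]
          _ ≤ _ := norm_add_le _ _
      linarith
    have hPQ' : ‖gx (x k) (y k)‖^2 + ‖gy (x (k+1)) (y k)‖^2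
        ≤ (L*r + L*(η*((1+α)*(L*r))))^2 :=
      lemC hq'tri (norm_nonneg _) hsum hQr (mul_nonneg hL.le hDnn) (norm_nonneg _)
    have hVtri : ‖v‖ ≤ ‖gy (x (k+1)) (y k)‖ + α*(L*r + L*(η*((1+α)*(L*r)))) := by
      have e : gy (x (k+1)) (y k) + (v - gy (x (k+1)) (y k)) = v := by abel
      have h2 : ‖v‖ ≤ ‖gy (x (k+1)) (y k)‖ + ‖v - gy (x (k+1)) (y k)‖ := by
        calc ‖v‖ = ‖gy (x (k+1)) (y k) + (v - gy (x (k+1)) (y k))‖ := by rw [e]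
          _ ≤ _ := norm_add_le _ _
      have h4 : α * (L*(r + η*((1+α)*(L*r))))
          = α*(L*r + L*(η*((1+α)*(L*r)))) := by ring
      linarith [hey, h4.le, h4.ge]
    have hQ'r2 : ‖gy (x (k+1)) (y k)‖ ≤ L*r + L*(η*((1+α)*(L*r))) := by
      have h4 : L*(r + η*((1+α)*(L*r))) = L*r + L*(η*((1+α)*(L*r))) := by ring
      linarith [hQ'r, h4.le, h4.ge]
    have hc2nn2 : (0:ℝ) ≤ L*r + L*(η*((1+α)*(L*r))) := by
      have := mul_nonneg hL.le hDnn; linarith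
    have hUV : ‖u‖^2 + ‖v‖^2 ≤ (L*r + L*(η*((1+α)*(L*r))))^2
        + (2*α+α^2)*((L*r)^2 + (L*r + L*(η*((1+α)*(L*r))))^2) :=
      lemD hU hVtri (norm_nonneg u) (norm_nonneg v) hPr hQ'r2 hPQ' hα₀ hLr0 hc2nn2
        (norm_nonneg _) (norm_nonneg _)
    -- expansion of the squared distances
    have eq1 : ‖x (k+1) - xstar‖^2 = ‖a‖^2 - 2*(η*⟪a, u⟫) + η^2*‖u‖^2 := by
      rw [hx'_eq, norm_sub_sq_real, real_inner_smul_right, hnu, mul_pow]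
    have eq2 : ‖y (k+1) - ystar‖^2 = ‖b‖^2 + 2*(η*⟪b, v⟫) + η^2*‖v‖^2 := by
      rw [hy'_eq, norm_add_sq_real, real_inner_smul_right, hnv, mul_pow]
    rw [eq1, eq2]
    exact lemE hT hUV hr2 hη2 hη0.le hr0
end

section
/- Let f : ℝ^{d_x} × ℝ^{d_y} → ℝ be differentiable and (μ_x, μ_y)-strongly-convex–strongly-concave with (L_x, L_y, L_{xy})-Lipschitz partial gradients, let g̃_x, g̃_y be inexact partial gradients with relative error α ∈ [0,1), let (x*, y*) be a saddle point (∇_x f(x*,y*) = 0 and ∇_y f(x*,y*) = 0), and let step sizes η_x, η_y > 0 satisfy max{η_x, η_y} ≤ (1/(2(α + (1 + α)²)))·min{1/L_x, 1/L_y}. Then the Inexact Sim-GDA iterates (x^k, y^k) with steps (η_x, η_y) satisfy, for every k: (1/η_x)·‖x^{k+1} − x*‖² + (1/η_y)·‖y^{k+1} − y*‖² ≤ (1/η_x + α/max{η_x, η_y} − μ_x + 2·max{η_x, η_y}·((1 + α)² + α)·L_{xy}²)·‖x^k − x*‖² + (1/η_y + α/max{η_x, η_y} − μ_y + 2·max{η_x,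 η_y}·((1 + α)² + α)·L_{xy}²)·‖y^k − y*‖². -/
/-!
Write `a = x - x*`, `b = y - y*`, `G = (∇ₓf, ∇ᵧf)(x, y)`, `η = max ηx ηy` and
`S = ⟪a, ∇ₓf⟫ - ⟪b, ∇ᵧf⟫`. Expanding the squares, one step changes the weighted distance by
`-2S`, plus an error term that Cauchy–Schwarz and AM–GM bound by `αη‖G‖² + (α/η)(‖a‖² + ‖b‖²)`,
plus a step term at most `η(1 + α)²‖G‖²`. Strong convexity–concavity at the saddle point gives
`S ≥ μx‖a‖² + μy‖b‖²`; cocoercivity of the partial gradients (via the descent lemma) gives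
`S ≥ Qx/(2Lx) + Qy/(2Ly)`, where the cross-Lipschitz bounds yield
`‖G‖² ≤ Qx + Qy + 2Lxy²(‖a‖² + ‖b‖²)`. The step-size condition `η((1 + α)² + α) ≤ 1/(2L)`
lets the second bound absorb all the `‖G‖²` terms.
-/

open scoped RealInnerProductSpace
open Set

section Gradient

variable {E : Type*} [NormedAddCommGroup E] [InnerProductSpace ℝ E] [CompleteSpace E]
  {h : E → ℝ} {g p q : E}

theorem HasGradientAt.neg (hg : HasGradientAt h g p) : HasGradientAt (fun z ↦ -h z) (-g) p := by
  rw [hasGradientAt_iff_hasFDerivAt] at hg ⊢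
  rw [map_neg]
  exact hg.neg

theorem HasGradientAt.hasDerivAt_add_smul {d : E} {t : ℝ} (hg : HasGradientAt h g (p + t • d)) :
    HasDerivAt (fun s : ℝ ↦ h (p + s • d)) ⟪g, d⟫ t := by
  have hline : HasDerivAt (fun s : ℝ ↦ p + s • d) d t := by
    simpa using ((hasDerivAt_id t).smul_const d).const_add p
  simpa [InnerProductSpace.toDual_apply_apply, Function.comp_def] using
    hg.hasFDerivAt.comp_hasDerivAt t hline

theorem StrongConvexOn.add_inner_add_le_of_hasGradientAt {s : Set E} {μ : ℝ}
    (hc : StrongConvexOn s μ h) (hp : p ∈ s) (hq : q ∈ s) (hg : HasGradientAt h g p) :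
    h p + ⟪g, q - p⟫ + μ / 2 * ‖q - p‖ ^ 2 ≤ h q := by
  set d := q - p with hd
  -- `ψ` stays below `ψ 0 = h p` on `[0, 1]` by strong convexity, so its slope at `0` is `≤ 0`.
  let ψ : ℝ → ℝ := fun t ↦
    h (p + t • d) - t * (h q - h p - μ / 2 * ‖d‖ ^ 2) - μ / 2 * t ^ 2 * ‖d‖ ^ 2
  have hψ : HasDerivAt ψ (⟪g, d⟫ - (h q - h p - μ / 2 * ‖d‖ ^ 2)) 0 := by
    have hline := (show HasGradientAt h g (p + (0 : ℝ) • d) by simpa using hg).hasDerivAt_add_smul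
    exact ((hline.sub ((hasDerivAt_id 0).mul_const _)).sub
      (((hasDerivAt_pow 2 0).const_mul (μ / 2)).mul_const (‖d‖ ^ 2))).congr_deriv (by simp)
  have hmax : IsLocalMaxOn ψ (Icc 0 1) 0 := by
    refine Filter.eventually_of_mem self_mem_nhdsWithin fun t ⟨ht0, ht1⟩ ↦ ?_
    have hconv := hc.2 hq hp ht0 (sub_nonneg.2 ht1) (add_sub_cancel t 1)
    have hpt : t • q + (1 - t) • p = p + t • d := by module
    simp only [hpt, smul_eq_mul, ← hd] at hconv
    have hψ0 : ψ 0 = h p := by simp [ψ]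
    show ψ t ≤ ψ 0
    rw [hψ0]
    simp only [ψ]
    linarith
  have hcone : (1 : ℝ) ∈ posTangentConeAt (Icc 0 1) 0 :=
    mem_posTangentConeAt_of_segment_subset (by simp [segment_eq_Icc])
  have := hmax.hasFDerivWithinAt_nonpos hψ.hasFDerivAt.hasFDerivWithinAt hcone
  simp only [ContinuousLinearMap.toSpanSingleton_apply, one_smul] at this
  linarith

theorem StrongConcaveOn.le_add_inner_sub_of_hasGradientAt {s : Set E} {μ : ℝ}
    (hc : StrongConcaveOn s μ h) (hp : p ∈ s) (hq : q ∈ s) (hg : HasGradientAt h g p) :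
    h q ≤ h p + ⟪g, q - p⟫ - μ / 2 * ‖q - p‖ ^ 2 := by
  have := StrongConvexOn.add_inner_add_le_of_hasGradientAt (h := fun z ↦ -h z) hc.neg hp hq hg.neg
  simp only [inner_neg_left] at this
  linarith

theorem le_add_inner_add_of_lipschitz_gradient {G : E → E} {L : ℝ}
    (hG : ∀ z, HasGradientAt h (G z) z) (hlip : ∀ u v, ‖G u - G v‖ ≤ L * ‖u - v‖) (u v : E) :
    h u ≤ h v + ⟪G v, u - v⟫ + L / 2 * ‖u - v‖ ^ 2 := by
  set d := u - v with hd
  let ψ : ℝ → ℝ := fun t ↦ h (v + t • d) - t * ⟪G v, d⟫ - L / 2 * t ^ 2 * ‖d‖ ^ 2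
  have hψ (t : ℝ) : HasDerivAt ψ (⟪G (v + t • d), d⟫ - ⟪G v, d⟫ - L * t * ‖d‖ ^ 2) t :=
    (((hG _).hasDerivAt_add_smul.sub ((hasDerivAt_id t).mul_const _)).sub
      (((hasDerivAt_pow 2 t).const_mul (L / 2)).mul_const (‖d‖ ^ 2))).congr_deriv
      (by simp only [Nat.cast_ofNat, Nat.add_one_sub_one, pow_one]; ring)
  have hanti : AntitoneOn ψ (Ici 0) := by
    refine antitoneOn_of_hasDerivWithinAt_nonpos (convex_Ici 0)
      (fun t _ ↦ (hψ t).continuousAt.continuousWithinAt) (fun t _ ↦ (hψ t).hasDerivWithinAt)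
      fun t ht ↦ ?_
    rw [interior_Ici] at ht
    have hGt : ‖G (v + t • d) - G v‖ ≤ L * (t * ‖d‖) := by
      simpa [norm_smul, abs_of_pos (show 0 < t from ht)] using hlip (v + t • d) v
    have := real_inner_le_norm (G (v + t • d) - G v) d
    rw [inner_sub_left] at this
    nlinarith [norm_nonneg d]
  have := hanti (mem_Ici.2 le_rfl) (mem_Ici.2 zero_le_one) zero_le_one
  simp only [ψ, zero_smul, add_zero, one_smul, hd, add_sub_cancel] at this
  linarith

theorem ConvexOn.norm_sub_sq_div_le_of_lipschitz_gradient {G : E → E} {L : ℝ}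
    (hc : ConvexOn ℝ univ h) (hL : 0 < L) (hG : ∀ z, HasGradientAt h (G z) z)
    (hlip : ∀ u v, ‖G u - G v‖ ≤ L * ‖u - v‖) (p q : E) :
    ‖G q - G p‖ ^ 2 / (2 * L) ≤ h q - h p - ⟪G p, q - p⟫ := by
  -- Compare the descent step `r` from `q` with the supporting hyperplane of `h` at `p`.
  set w := G q - G p
  set r := q - L⁻¹ • w
  have hdescent := le_add_inner_add_of_lipschitz_gradient hG hlip r q
  have hsupport := (strongConvexOn_zero.2 hc).add_inner_add_le_of_hasGradientAt
    (mem_univ p) (mem_univ r) (hG p)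
  have hrq : r - q = -(L⁻¹ • w) := by simp [r]
  have hrp : r - p = (q - p) - L⁻¹ • w := by simp only [r]; abel
  have hw : ⟪G q, w⟫ - ⟪G p, w⟫ = ‖w‖ ^ 2 := by
    rw [← inner_sub_left, real_inner_self_eq_norm_sq]
  rw [hrq, inner_neg_right, real_inner_smul_right, norm_neg, norm_smul, Real.norm_eq_abs,
    abs_of_pos (inv_pos.2 hL), mul_pow] at hdescent
  rw [hrp, inner_sub_right, real_inner_smul_right] at hsupport
  have key : ‖w‖ ^ 2 / (2 * L) = L⁻¹ * (⟪G q, w⟫ - ⟪G p, w⟫) - L / 2 * (L⁻¹ ^ 2 * ‖w‖ ^ 2) := by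
    rw [hw]; field_simp; ring
  linarith

theorem ConcaveOn.norm_sub_sq_div_le_of_lipschitz_gradient {G : E → E} {L : ℝ}
    (hc : ConcaveOn ℝ univ h) (hL : 0 < L) (hG : ∀ z, HasGradientAt h (G z) z)
    (hlip : ∀ u v, ‖G u - G v‖ ≤ L * ‖u - v‖) (p q : E) :
    ‖G q - G p‖ ^ 2 / (2 * L) ≤ h p - h q + ⟪G p, q - p⟫ := by
  have := hc.neg.norm_sub_sq_div_le_of_lipschitz_gradient hL (fun z ↦ (hG z).neg)
    (fun u v ↦ by simpa only [neg_sub_neg, norm_sub_rev] using hlip v u) p q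
  simp only [neg_sub_neg, norm_sub_rev (G p), Pi.neg_apply, inner_neg_left] at this
  linarith

end Gradient

theorem norm_sq_add_norm_sq_le_of_relError {E F : Type*} [SeminormedAddCommGroup E]
    [SeminormedAddCommGroup F] {u u' : E} {v v' : F} {α : ℝ} (hα : 0 ≤ α)
    (h : ‖u' - u‖ ^ 2 + ‖v' - v‖ ^ 2 ≤ α ^ 2 * (‖u‖ ^ 2 + ‖v‖ ^ 2)) :
    ‖u'‖ ^ 2 + ‖v'‖ ^ 2 ≤ (1 + α) ^ 2 * (‖u‖ ^ 2 + ‖v‖ ^ 2) := by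
  have hu : ‖u'‖ ≤ ‖u‖ + ‖u' - u‖ := norm_le_insert' u' u
  have hv : ‖v'‖ ≤ ‖v‖ + ‖v' - v‖ := norm_le_insert' v' v
  -- Cauchy–Schwarz in `ℝ²`
  have hcs : ‖u‖ * ‖u' - u‖ + ‖v‖ * ‖v' - v‖ ≤ α * (‖u‖ ^ 2 + ‖v‖ ^ 2) := by
    refine le_of_sq_le_sq ?_ (by positivity)
    nlinarith [sq_nonneg (‖u‖ * ‖v' - v‖ - ‖v‖ * ‖u' - u‖)]
  nlinarith [norm_nonneg u', norm_nonneg v']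

theorem two_mul_inner_add_inner_le_of_relError {E F : Type*} [NormedAddCommGroup E]
    [InnerProductSpace ℝ E] [NormedAddCommGroup F] [InnerProductSpace ℝ F] {u u' a : E}
    {v v' b : F} {α η : ℝ} (hα : 0 ≤ α) (hη : 0 < η)
    (h : ‖u' - u‖ ^ 2 + ‖v' - v‖ ^ 2 ≤ α ^ 2 * (‖u‖ ^ 2 + ‖v‖ ^ 2)) :
    2 * (⟪a, u' - u⟫ + ⟪b, v' - v⟫)
      ≤ α * η * (‖u‖ ^ 2 + ‖v‖ ^ 2) + α / η * (‖a‖ ^ 2 + ‖b‖ ^ 2) := by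
  have hinner : ⟪a, u' - u⟫ + ⟪b, v' - v⟫ ≤ ‖a‖ * ‖u' - u‖ + ‖b‖ * ‖v' - v‖ :=
    add_le_add (real_inner_le_norm _ _) (real_inner_le_norm _ _)
  -- Cauchy–Schwarz in `ℝ²`, then AM–GM `2 √(P D) ≤ η P + D / η`.
  have hcs : (‖a‖ * ‖u' - u‖ + ‖b‖ * ‖v' - v‖) ^ 2
      ≤ (‖a‖ ^ 2 + ‖b‖ ^ 2) * (α ^ 2 * (‖u‖ ^ 2 + ‖v‖ ^ 2)) := by
    nlinarith [sq_nonneg (‖a‖ * ‖v' - v‖ - ‖b‖ * ‖u' - u‖)]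
  have hamgm : 4 * ((‖a‖ ^ 2 + ‖b‖ ^ 2) * (‖u‖ ^ 2 + ‖v‖ ^ 2))
      ≤ (η * (‖u‖ ^ 2 + ‖v‖ ^ 2) + (‖a‖ ^ 2 + ‖b‖ ^ 2) / η) ^ 2 := by
    have : (η * (‖u‖ ^ 2 + ‖v‖ ^ 2) + (‖a‖ ^ 2 + ‖b‖ ^ 2) / η) ^ 2
        - 4 * ((‖a‖ ^ 2 + ‖b‖ ^ 2) * (‖u‖ ^ 2 + ‖v‖ ^ 2))
        = (η * (‖u‖ ^ 2 + ‖v‖ ^ 2) - (‖a‖ ^ 2 + ‖b‖ ^ 2) / η) ^ 2 := by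
      field_simp; ring
    nlinarith [sq_nonneg (η * (‖u‖ ^ 2 + ‖v‖ ^ 2) - (‖a‖ ^ 2 + ‖b‖ ^ 2) / η)]
  have hsq : (2 * (‖a‖ * ‖u' - u‖ + ‖b‖ * ‖v' - v‖)) ^ 2
      ≤ (α * (η * (‖u‖ ^ 2 + ‖v‖ ^ 2) + (‖a‖ ^ 2 + ‖b‖ ^ 2) / η)) ^ 2 := by
    nlinarith [mul_le_mul_of_nonneg_left hamgm (sq_nonneg α)]
  have hrhs : α * (η * (‖u‖ ^ 2 + ‖v‖ ^ 2) + (‖a‖ ^ 2 + ‖b‖ ^ 2) / η)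
      = α * η * (‖u‖ ^ 2 + ‖v‖ ^ 2) + α / η * (‖a‖ ^ 2 + ‖b‖ ^ 2) := by ring
  linarith [le_of_sq_le_sq hsq (by positivity)]

theorem one_div_mul_norm_sub_smul_sq {E : Type*} [NormedAddCommGroup E] [InnerProductSpace ℝ E]
    {η : ℝ} (hη : η ≠ 0) (a g : E) :
    1 / η * ‖a - η • g‖ ^ 2 = 1 / η * ‖a‖ ^ 2 - 2 * ⟪a, g⟫ + η * ‖g‖ ^ 2 := by
  rw [norm_sub_sq_real, real_inner_smul_right, norm_smul, Real.norm_eq_abs, mul_pow, sq_abs]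
  field_simp

theorem inexact_step_norm_sq_le {E F : Type*} [NormedAddCommGroup E] [InnerProductSpace ℝ E]
    [NormedAddCommGroup F] [InnerProductSpace ℝ F] {a g g' : E} {b h h' : F}
    {ηx ηy η α μx μy M : ℝ} (hηx : 0 < ηx) (hηy : 0 < ηy) (hηxη : ηx ≤ η) (hηyη : ηy ≤ η)
    (hα : 0 ≤ α) (hrel : ‖g' - g‖ ^ 2 + ‖h' - h‖ ^ 2 ≤ α ^ 2 * (‖g‖ ^ 2 + ‖h‖ ^ 2))
    (hgrad : η * ((1 + α) ^ 2 + α) * (‖g‖ ^ 2 + ‖h‖ ^ 2) + μx * ‖a‖ ^ 2 + μy * ‖b‖ ^ 2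
      ≤ 2 * (⟪a, g⟫ - ⟪b, h⟫) + M * (‖a‖ ^ 2 + ‖b‖ ^ 2)) :
    1 / ηx * ‖a - ηx • g'‖ ^ 2 + 1 / ηy * ‖b + ηy • h'‖ ^ 2
      ≤ (1 / ηx + α / η - μx + M) * ‖a‖ ^ 2 + (1 / ηy + α / η - μy + M) * ‖b‖ ^ 2 := by
  have hη : 0 < η := hηx.trans_le hηxη
  have hx := one_div_mul_norm_sub_smul_sq hηx.ne' a g'
  have hy := one_div_mul_norm_sub_smul_sq hηy.ne' b (-h')
  rw [smul_neg, sub_neg_eq_add, inner_neg_right, norm_neg] at hy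
  have herr := two_mul_inner_add_inner_le_of_relError (a := -a) (b := b) hα hη hrel
  rw [norm_neg, inner_neg_left, inner_sub_right, inner_sub_right] at herr
  have hnorm := norm_sq_add_norm_sq_le_of_relError hα hrel
  have hsx := mul_le_mul_of_nonneg_right hηxη (sq_nonneg ‖g'‖)
  have hsy := mul_le_mul_of_nonneg_right hηyη (sq_nonneg ‖h'‖)
  have hsum := mul_le_mul_of_nonneg_left hnorm hη.le
  rw [hx, hy]
  linarith

theorem sq_le_of_le_add_of_le_add {t a b c : ℝ} (ht : 0 ≤ t) (ha : t ≤ a + c) (hb : t ≤ b + c) :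
    t ^ 2 ≤ a ^ 2 + b ^ 2 + 2 * c ^ 2 := by
  nlinarith [sq_nonneg (a - c), sq_nonneg (b - c)]

theorem norm_sq_le_of_lipschitz_snd {X Y V : Type*} [SeminormedAddCommGroup Y]
    [SeminormedAddCommGroup V] {G : X → Y → V} {K : ℝ}
    (hK : ∀ x y₁ y₂, ‖G x y₁ - G x y₂‖ ≤ K * ‖y₁ - y₂‖) {xs : X} {ys : Y} (hG : G xs ys = 0)
    (x : X) (y : Y) :
    ‖G x y‖ ^ 2 ≤ ‖G xs y - G x y‖ ^ 2 + ‖G x ys‖ ^ 2 + 2 * (K ^ 2 * ‖y - ys‖ ^ 2) := by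
  have h₁ : ‖G x y‖ ≤ ‖G xs y - G x y‖ + K * ‖y - ys‖ := by
    have := hK xs y ys
    rw [hG, sub_zero] at this
    linarith [norm_le_norm_sub_add (G x y) (G xs y), norm_sub_rev (G x y) (G xs y)]
  have h₂ : ‖G x y‖ ≤ ‖G x ys‖ + K * ‖y - ys‖ := by
    linarith [norm_le_insert' (G x y) (G x ys), hK x y ys]
  have := sq_le_of_le_add_of_le_add (norm_nonneg _) h₁ h₂
  rwa [mul_pow] at this

section Saddle

variable {E F : Type*} [NormedAddCommGroup E] [InnerProductSpace ℝ E] [CompleteSpace E]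
  [NormedAddCommGroup F] [InnerProductSpace ℝ F] [CompleteSpace F]
  {f : E → F → ℝ} {gx : E → F → E} {gy : E → F → F} {xs : E} {ys : F}

theorem saddle_strongMonotone {μx μy : ℝ} (hgx : ∀ x y, HasGradientAt (f · y) (gx x y) x)
    (hgy : ∀ x y, HasGradientAt (f x ·) (gy x y) y)
    (hconv : ∀ y, StrongConvexOn univ μx (f · y)) (hconc : ∀ x, StrongConcaveOn univ μy (f x))
    (hxs : gx xs ys = 0) (hys : gy xs ys = 0) (x : E) (y : F) :
    μx * ‖x - xs‖ ^ 2 + μy * ‖y - ys‖ ^ 2 ≤ ⟪x - xs, gx x y⟫ - ⟪y - ys, gy x y⟫ := by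
  have h₁ := (hconv y).add_inner_add_le_of_hasGradientAt (mem_univ x) (mem_univ xs) (hgx x y)
  have h₂ := (hconv ys).add_inner_add_le_of_hasGradientAt (mem_univ xs) (mem_univ x) (hgx xs ys)
  have h₃ := (hconc x).le_add_inner_sub_of_hasGradientAt (mem_univ y) (mem_univ ys) (hgy x y)
  have h₄ := (hconc xs).le_add_inner_sub_of_hasGradientAt (mem_univ ys) (mem_univ y) (hgy xs ys)
  rw [← neg_sub x, inner_neg_right, norm_neg] at h₁
  rw [← neg_sub y, inner_neg_right, norm_neg] at h₃
  rw [hxs, inner_zero_left] at h₂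
  rw [hys, inner_zero_left] at h₄
  rw [real_inner_comm (gx x y), real_inner_comm (gy x y)]
  linarith

theorem saddle_cocoercive {μx μy Lx Ly : ℝ} (hμx : 0 ≤ μx) (hμy : 0 ≤ μy) (hLx : 0 < Lx)
    (hLy : 0 < Ly) (hgx : ∀ x y, HasGradientAt (f · y) (gx x y) x)
    (hgy : ∀ x y, HasGradientAt (f x ·) (gy x y) y)
    (hconv : ∀ y, StrongConvexOn univ μx (f · y)) (hconc : ∀ x, StrongConcaveOn univ μy (f x))
    (hLxx : ∀ x₁ x₂ y, ‖gx x₁ y - gx x₂ y‖ ≤ Lx * ‖x₁ - x₂‖)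
    (hLyy : ∀ x y₁ y₂, ‖gy x y₁ - gy x y₂‖ ≤ Ly * ‖y₁ - y₂‖)
    (hxs : gx xs ys = 0) (hys : gy xs ys = 0) (x : E) (y : F) :
    (‖gx xs y - gx x y‖ ^ 2 + ‖gx x ys‖ ^ 2) / (2 * Lx)
      + (‖gy x ys - gy x y‖ ^ 2 + ‖gy xs y‖ ^ 2) / (2 * Ly)
      ≤ ⟪x - xs, gx x y⟫ - ⟪y - ys, gy x y⟫ := by
  have hcx (y : F) : ConvexOn ℝ univ (f · y) := strongConvexOn_zero.1 ((hconv y).mono hμx)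
  have hcy (x : E) : ConcaveOn ℝ univ (f x) := strongConcaveOn_zero.1 ((hconc x).mono hμy)
  have h₁ := (hcx y).norm_sub_sq_div_le_of_lipschitz_gradient hLx (hgx · y)
    (fun u v ↦ hLxx u v y) x xs
  have h₂ := (hcx ys).norm_sub_sq_div_le_of_lipschitz_gradient hLx (hgx · ys)
    (fun u v ↦ hLxx u v ys) xs x
  have h₃ := (hcy x).norm_sub_sq_div_le_of_lipschitz_gradient hLy (hgy x ·) (hLyy x) y ys
  have h₄ := (hcy xs).norm_sub_sq_div_le_of_lipschitz_gradient hLy (hgy xs ·) (hLyy xs) ys y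
  rw [← neg_sub x, inner_neg_right] at h₁
  rw [← neg_sub y, inner_neg_right] at h₃
  rw [hxs, sub_zero, inner_zero_left] at h₂
  rw [hys, sub_zero, inner_zero_left] at h₄
  rw [real_inner_comm (gx x y), real_inner_comm (gy x y), add_div, add_div]
  linarith

theorem saddle_gradient_norm_sq_le {μx μy Lx Ly Lxy c : ℝ} (hμx : 0 ≤ μx) (hμy : 0 ≤ μy)
    (hLx : 0 < Lx) (hLy : 0 < Ly) (hgx : ∀ x y, HasGradientAt (f · y) (gx x y) x)
    (hgy : ∀ x y, HasGradientAt (f x ·) (gy x y) y)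
    (hconv : ∀ y, StrongConvexOn univ μx (f · y)) (hconc : ∀ x, StrongConcaveOn univ μy (f x))
    (hLxx : ∀ x₁ x₂ y, ‖gx x₁ y - gx x₂ y‖ ≤ Lx * ‖x₁ - x₂‖)
    (hLxy : ∀ x y₁ y₂, ‖gx x y₁ - gx x y₂‖ ≤ Lxy * ‖y₁ - y₂‖)
    (hLyy : ∀ x y₁ y₂, ‖gy x y₁ - gy x y₂‖ ≤ Ly * ‖y₁ - y₂‖)
    (hLyx : ∀ x₁ x₂ y, ‖gy x₁ y - gy x₂ y‖ ≤ Lxy * ‖x₁ - x₂‖)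
    (hxs : gx xs ys = 0) (hys : gy xs ys = 0) (hc : 0 ≤ c) (hcx : c ≤ 1 / (2 * Lx))
    (hcy : c ≤ 1 / (2 * Ly)) (x : E) (y : F) :
    c * (‖gx x y‖ ^ 2 + ‖gy x y‖ ^ 2) + μx * ‖x - xs‖ ^ 2 + μy * ‖y - ys‖ ^ 2
      ≤ 2 * (⟪x - xs, gx x y⟫ - ⟪y - ys, gy x y⟫)
        + 2 * c * Lxy ^ 2 * (‖x - xs‖ ^ 2 + ‖y - ys‖ ^ 2) := by
  have hmono := saddle_strongMonotone hgx hgy hconv hconc hxs hys x y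
  have hcoco := saddle_cocoercive hμx hμy hLx hLy hgx hgy hconv hconc hLxx hLyy hxs hys x y
  have hnx := norm_sq_le_of_lipschitz_snd hLxy hxs x y
  have hny := norm_sq_le_of_lipschitz_snd (G := Function.swap gy)
    (fun y x₁ x₂ ↦ hLyx x₁ x₂ y) hys y x
  simp only [Function.swap] at hny
  have hscale {a b : ℝ} (ha : 0 ≤ a) (hb : 0 < b) (hcb : c ≤ 1 / b) : c * a ≤ a / b := by
    rw [← one_div_mul_eq_div]
    exact mul_le_mul_of_nonneg_right hcb ha
  have hx := hscale (by positivity) (by positivity) hcx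
    (a := ‖gx xs y - gx x y‖ ^ 2 + ‖gx x ys‖ ^ 2)
  have hy := hscale (by positivity) (by positivity) hcy
    (a := ‖gy x ys - gy x y‖ ^ 2 + ‖gy xs y‖ ^ 2)
  linarith [mul_le_mul_of_nonneg_left (add_le_add hnx hny) hc]

end Saddle

theorem pos_and_mul_le_of_le_mul_one_div {η C L : ℝ} (hη : 0 < η) (hC : 0 < C)
    (h : η ≤ 1 / (2 * C) * (1 / L)) : 0 < L ∧ η * C ≤ 1 / (2 * L) := by
  have hL : 0 < L := one_div_pos.1 (pos_of_mul_pos_right (hη.trans_le h) (by positivity))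
  refine ⟨hL, ?_⟩
  calc η * C ≤ 1 / (2 * C) * (1 / L) * C := mul_le_mul_of_nonneg_right h hC.le
    _ = 1 / (2 * L) := by field_simp

theorem stmt_15_general {dx dy : ℕ} (μx μy Lx Ly Lxy : ℝ)
    (hμx : 0 ≤ μx) (hμy : 0 ≤ μy)
    (f : EuclideanSpace ℝ (Fin dx) → EuclideanSpace ℝ (Fin dy) → ℝ)
    (hf : Differentiable ℝ (fun p : EuclideanSpace ℝ (Fin dx) × EuclideanSpace ℝ (Fin dy) => f p.1 p.2))
    (gx : EuclideanSpace ℝ (Fin dx) → EuclideanSpace ℝ (Fin dy) → EuclideanSpace ℝ (Fin dx))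
    (gy : EuclideanSpace ℝ (Fin dx) → EuclideanSpace ℝ (Fin dy) → EuclideanSpace ℝ (Fin dy))
    (hgx : ∀ x y, gx x y = gradient (fun x' => f x' y) x)
    (hgy : ∀ x y, gy x y = gradient (fun y' => f x y') y)
    (hconv : ∀ y, StrongConvexOn Set.univ μx (fun x => f x y))
    (hconc : ∀ x, StrongConcaveOn Set.univ μy (f x))
    (hLxx : ∀ x₁ x₂ y, ‖gx x₁ y - gx x₂ y‖ ≤ Lx * ‖x₁ - x₂‖)
    (hLxy' : ∀ x y₁ y₂, ‖gx x y₁ - gx x y₂‖ ≤ Lxy * ‖y₁ - y₂‖)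
    (hLyy : ∀ x y₁ y₂, ‖gy x y₁ - gy x y₂‖ ≤ Ly * ‖y₁ - y₂‖)
    (hLyx : ∀ x₁ x₂ y, ‖gy x₁ y - gy x₂ y‖ ≤ Lxy * ‖x₁ - x₂‖)
    (α : ℝ) (hα₀ : 0 ≤ α)
    (gtx : EuclideanSpace ℝ (Fin dx) → EuclideanSpace ℝ (Fin dy) → EuclideanSpace ℝ (Fin dx))
    (gty : EuclideanSpace ℝ (Fin dx) → EuclideanSpace ℝ (Fin dy) → EuclideanSpace ℝ (Fin dy))
    (hrel : ∀ x y, ‖gtx x y - gx x y‖ ^ 2 + ‖gty x y - gy x y‖ ^ 2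
      ≤ α ^ 2 * (‖gx x y‖ ^ 2 + ‖gy x y‖ ^ 2))
    (xstar : EuclideanSpace ℝ (Fin dx)) (ystar : EuclideanSpace ℝ (Fin dy))
    (hstar : gx xstar ystar = 0 ∧ gy xstar ystar = 0)
    (ηx ηy : ℝ) (hηx : 0 < ηx) (hηy : 0 < ηy)
    (hstep : max ηx ηy ≤ 1 / (2 * (α + (1 + α) ^ 2)) * min (1 / Lx) (1 / Ly))
    (x : ℕ → EuclideanSpace ℝ (Fin dx)) (y : ℕ → EuclideanSpace ℝ (Fin dy))
    (hxit : ∀ k, x (k + 1) = x k - ηx • gtx (x k) (y k))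
    (hyit : ∀ k, y (k + 1) = y k + ηy • gty (x k) (y k)) :
    ∀ k, (1 / ηx) * ‖x (k + 1) - xstar‖ ^ 2 + (1 / ηy) * ‖y (k + 1) - ystar‖ ^ 2
      ≤ (1 / ηx + α / max ηx ηy - μx
            + 2 * max ηx ηy * ((1 + α) ^ 2 + α) * Lxy ^ 2) * ‖x k - xstar‖ ^ 2
        + (1 / ηy + α / max ηx ηy - μy
            + 2 * max ηx ηy * ((1 + α) ^ 2 + α) * Lxy ^ 2) * ‖y k - ystar‖ ^ 2 := by
  have hgx' (x y) : HasGradientAt (fun x' ↦ f x' y) (gx x y) x := by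
    rw [hgx]
    exact (hf.comp (differentiable_id.prodMk (differentiable_const y)) x).hasGradientAt
  have hgy' (x y) : HasGradientAt (fun y' ↦ f x y') (gy x y) y := by
    rw [hgy]
    exact (hf.comp ((differentiable_const x).prodMk differentiable_id) y).hasGradientAt
  have hη : 0 < max ηx ηy := lt_max_of_lt_left hηx
  have hC : 0 < (1 + α) ^ 2 + α := by positivity
  rw [add_comm α] at hstep
  obtain ⟨hLx, hcx⟩ := pos_and_mul_le_of_le_mul_one_div hη hC
    (hstep.trans (mul_le_mul_of_nonneg_left (min_le_left _ _) (by positivity)))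
  obtain ⟨hLy, hcy⟩ := pos_and_mul_le_of_le_mul_one_div hη hC
    (hstep.trans (mul_le_mul_of_nonneg_left (min_le_right _ _) (by positivity)))
  intro k
  rw [hxit, hyit, sub_right_comm, add_sub_right_comm]
  refine (inexact_step_norm_sq_le hηx hηy (le_max_left _ _) (le_max_right _ _) hα₀ (hrel _ _)
    (saddle_gradient_norm_sq_le hμx hμy hLx hLy hgx' hgy' hconv hconc hLxx hLxy' hLyy hLyx
      hstar.1 hstar.2 (by positivity) hcx hcy _ _)).trans_eq ?_
  ring

/-- Lemma (one-step Lyapunov contraction of Inexact Sim-GDA for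
strongly-convex–strongly-concave `f` with componentwise Lipschitz partial
gradients and relative gradient error `α`). -/
theorem stmt_15 {dx dy : ℕ} (μx μy Lx Ly Lxy : ℝ)
    (hμx : 0 ≤ μx) (hLx : μx ≤ Lx) (hμy : 0 ≤ μy) (hLy : μy ≤ Ly) (hLxy : 0 ≤ Lxy)
    (f : EuclideanSpace ℝ (Fin dx) → EuclideanSpace ℝ (Fin dy) → ℝ)
    (hf : Differentiable ℝ (fun p : EuclideanSpace ℝ (Fin dx) × EuclideanSpace ℝ (Fin dy) => f p.1 p.2))
    (gx : EuclideanSpace ℝ (Fin dx) → EuclideanSpace ℝ (Fin dy) → EuclideanSpace ℝ (Fin dx))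
    (gy : EuclideanSpace ℝ (Fin dx) → EuclideanSpace ℝ (Fin dy) → EuclideanSpace ℝ (Fin dy))
    (hgx : ∀ x y, gx x y = gradient (fun x' => f x' y) x)
    (hgy : ∀ x y, gy x y = gradient (fun y' => f x y') y)
    (hconv : ∀ y, StrongConvexOn Set.univ μx (fun x => f x y))
    (hconc : ∀ x, StrongConcaveOn Set.univ μy (f x))
    (hLxx : ∀ x₁ x₂ y, ‖gx x₁ y - gx x₂ y‖ ≤ Lx * ‖x₁ - x₂‖)
    (hLxy' : ∀ x y₁ y₂, ‖gx x y₁ - gx x y₂‖ ≤ Lxy * ‖y₁ - y₂‖)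
    (hLyy : ∀ x y₁ y₂, ‖gy x y₁ - gy x y₂‖ ≤ Ly * ‖y₁ - y₂‖)
    (hLyx : ∀ x₁ x₂ y, ‖gy x₁ y - gy x₂ y‖ ≤ Lxy * ‖x₁ - x₂‖)
    (α : ℝ) (hα₀ : 0 ≤ α) (hα₁ : α < 1)
    (gtx : EuclideanSpace ℝ (Fin dx) → EuclideanSpace ℝ (Fin dy) → EuclideanSpace ℝ (Fin dx))
    (gty : EuclideanSpace ℝ (Fin dx) → EuclideanSpace ℝ (Fin dy) → EuclideanSpace ℝ (Fin dy))
    (hrel : ∀ x y, ‖gtx x y - gx x y‖ ^ 2 + ‖gty x y - gy x y‖ ^ 2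
      ≤ α ^ 2 * (‖gx x y‖ ^ 2 + ‖gy x y‖ ^ 2))
    (xstar : EuclideanSpace ℝ (Fin dx)) (ystar : EuclideanSpace ℝ (Fin dy))
    (hstar : gx xstar ystar = 0 ∧ gy xstar ystar = 0)
    (ηx ηy : ℝ) (hηx : 0 < ηx) (hηy : 0 < ηy)
    (hstep : max ηx ηy ≤ 1 / (2 * (α + (1 + α) ^ 2)) * min (1 / Lx) (1 / Ly))
    (x : ℕ → EuclideanSpace ℝ (Fin dx)) (y : ℕ → EuclideanSpace ℝ (Fin dy))
    (hxit : ∀ k, x (k + 1) = x k - ηx • gtx (x k) (y k))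
    (hyit : ∀ k, y (k + 1) = y k + ηy • gty (x k) (y k)) :
    ∀ k, (1 / ηx) * ‖x (k + 1) - xstar‖ ^ 2 + (1 / ηy) * ‖y (k + 1) - ystar‖ ^ 2
      ≤ (1 / ηx + α / max ηx ηy - μx
            + 2 * max ηx ηy * ((1 + α) ^ 2 + α) * Lxy ^ 2) * ‖x k - xstar‖ ^ 2
        + (1 / ηy + α / max ηx ηy - μy
            + 2 * max ηx ηy * ((1 + α) ^ 2 + α) * Lxy ^ 2) * ‖y k - ystar‖ ^ 2 :=
  stmt_15_general μx μy Lx Ly Lxy hμx hμy f hf gx gy hgx hgy hconv hconc hLxx hLxy' hLyy hLyx α hα₀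
    gtx gty hrel xstar ystar hstar ηx ηy hηx hηy hstep x y hxit hyit
end

section
/- Let g : ℝ^d → ℝ^d be L-Lipschitz and μ-quasi-strongly monotone with respect to a zero z* of g (0 < μ ≤ L), let g̃ be an inexact oracle for g with relative error α ∈ [0,1), and let η > 0. Then the Inexact ExtraGradient iterates with step η satisfy, for every k: ‖z^{k+1} − z*‖² ≤ ‖z^k − z*‖² − η·μ·‖z^{k+1/2} − z*‖² + [ (η·α²/μ + 3·η²·α²)·(2L² + 2/(η²·(1 − α)²)) + 3·η²·L² + 3·α²/(1 − α)² − 1 ]·‖z^{k+1/2} − z^k‖². -/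
open scoped RealInnerProductSpace

lemma key_identity {E : Type*} [NormedAddCommGroup E] [InnerProductSpace ℝ E]
    (u v w : E) :
    ‖w‖ ^ 2 = ‖u‖ ^ 2 - ‖u - v‖ ^ 2 + ‖w - v‖ ^ 2 + 2 * ⟪w - u, v⟫ := by
  have h1 := @norm_sub_sq_real E _ _ u v
  have h2 := @norm_sub_sq_real E _ _ w v
  have h3 : ⟪w - u, v⟫ = ⟪w, v⟫ - ⟪u, v⟫ := inner_sub_left _ _ _
  linarith

set_option maxHeartbeats 1000000 in
/-- Lemma (one-step inequality for the Inexact ExtraGradient method on a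
Lipschitz, quasi-strongly monotone nonlinear equation, with relative error `α`). -/
theorem stmt_17 {d : ℕ} (μ L : ℝ) (hμ : 0 < μ) (hμL : μ ≤ L)
    (g : EuclideanSpace ℝ (Fin d) → EuclideanSpace ℝ (Fin d))
    (zstar : EuclideanSpace ℝ (Fin d)) (hzstar : g zstar = 0)
    (hlip : ∀ x y, ‖g x - g y‖ ≤ L * ‖x - y‖)
    (hqsm : ∀ x, ⟪g x, x - zstar⟫ ≥ μ * ‖x - zstar‖ ^ 2)
    (α : ℝ) (hα₀ : 0 ≤ α) (hα₁ : α < 1)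
    (g' : EuclideanSpace ℝ (Fin d) → EuclideanSpace ℝ (Fin d))
    (hrel : ∀ z, ‖g' z - g z‖ ≤ α * ‖g z‖)
    (η : ℝ) (hη : 0 < η)
    (z zh : ℕ → EuclideanSpace ℝ (Fin d))
    (hzh : ∀ k, zh k = z k - η • g' (z k))
    (hz : ∀ k, z (k + 1) = z k - η • g' (zh k)) :
    ∀ k, ‖z (k + 1) - zstar‖ ^ 2
      ≤ ‖z k - zstar‖ ^ 2 - η * μ * ‖zh k - zstar‖ ^ 2
        + ((η * α ^ 2 / μ + 3 * η ^ 2 * α ^ 2)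
              * (2 * L ^ 2 + 2 / (η ^ 2 * (1 - α) ^ 2))
            + 3 * η ^ 2 * L ^ 2 + 3 * α ^ 2 / (1 - α) ^ 2 - 1)
          * ‖zh k - z k‖ ^ 2 := by
  intro k
  set a := z k with ha
  set b := zh k with hb
  set c := z (k + 1) with hc
  have hba : b = a - η • g' a := hzh k
  have hca : c = a - η • g' b := hz k
  set Ga := ‖g a‖ with hGa
  set Gb := ‖g b‖ with hGb
  set D := ‖b - a‖ with hD
  set V := ‖b - zstar‖ with hV
  set W := ‖c - b‖ with hW
  clear_value Ga Gb D V W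
  have hβ : (0:ℝ) < 1 - α := by linarith
  have hβη : (0:ℝ) < η * (1 - α) := by positivity
  have hGa0 : 0 ≤ Ga := by rw [hGa]; exact norm_nonneg _
  have hGb0 : 0 ≤ Gb := by rw [hGb]; exact norm_nonneg _
  have hD0 : 0 ≤ D := by rw [hD]; exact norm_nonneg _
  have hV0 : 0 ≤ V := by rw [hV]; exact norm_nonneg _
  have hW0 : 0 ≤ W := by rw [hW]; exact norm_nonneg _
  -- identity
  have h1 : ‖c - zstar‖ ^ 2
      = ‖a - zstar‖ ^ 2 - D ^ 2 + W ^ 2 + 2 * ⟪c - a, b - zstar⟫ := by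
    have hid := key_identity (a - zstar) (b - zstar) (c - zstar)
    have e1 : (a - zstar) - (b - zstar) = a - b := by abel
    have e2 : (c - zstar) - (b - zstar) = c - b := by abel
    have e3 : (c - zstar) - (a - zstar) = c - a := by abel
    rw [e1, e2, e3] at hid
    rw [hid, norm_sub_rev a b, ← hD, ← hW]
  have hI : ⟪c - a, b - zstar⟫ = -(η * ⟪g' b, b - zstar⟫) := by
    have e : c - a = -(η • g' b) := by rw [hca]; abel
    rw [e, inner_neg_left, real_inner_smul_left]
  -- monotonicity with relative error
  have hmono : ⟪g' b, b - zstar⟫ ≥ μ * V ^ 2 - α * Gb * V := by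
    rw [hV, hGb]
    have hq := hqsm b
    have hcs := abs_real_inner_le_norm (g' b - g b) (b - zstar)
    have hrb : ‖g' b - g b‖ * ‖b - zstar‖ ≤ α * ‖g b‖ * ‖b - zstar‖ :=
      mul_le_mul_of_nonneg_right (hrel b) (norm_nonneg _)
    have hsplit : ⟪g' b, b - zstar⟫ = ⟪g b, b - zstar⟫ + ⟪g' b - g b, b - zstar⟫ := by
      rw [inner_sub_left]; ring
    have hna := neg_abs_le ⟪g' b - g b, b - zstar⟫
    rw [hsplit]
    linarith
  -- η(1-α)‖g a‖ ≤ D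
  have hGaD : η * (1 - α) * Ga ≤ D := by
    rw [hGa, hD]
    have e : b - a = -(η • g' a) := by rw [hba]; abel
    rw [e, norm_neg, norm_smul, Real.norm_eq_abs, abs_of_pos hη]
    have h2 : ‖g a‖ - ‖g' a‖ ≤ ‖g' a - g a‖ := by
      have t := norm_sub_norm_le (g a) (g' a)
      rwa [norm_sub_rev] at t
    have r := hrel a
    have h3 : (1 - α) * ‖g a‖ ≤ ‖g' a‖ := by linarith
    calc η * (1 - α) * ‖g a‖ = η * ((1 - α) * ‖g a‖) := by ring
      _ ≤ η * ‖g' a‖ := mul_le_mul_of_nonneg_left h3 hη.le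
  -- Lipschitz bound
  have hGbD : Gb ≤ L * D + Ga := by
    rw [hGb, hD, hGa]
    have h := hlip b a
    have t := norm_add_le (g b - g a) (g a)
    rw [sub_add_cancel] at t
    linarith
  -- W bound
  have hWb : W ≤ η * (α * Ga + L * D + α * Gb) := by
    rw [hW, hGa, hD, hGb]
    have e : c - b = η • (g' a - g' b) := by
      rw [hca, hba, smul_sub]; abel
    rw [e, norm_smul, Real.norm_eq_abs, abs_of_pos hη]
    have e2 : g' a - g' b = (g' a - g a) + (g a - g b) + (g b - g' b) := by abel
    have t1 := norm_add_le ((g' a - g a) + (g a - g b)) (g b - g' b)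
    have t2 := norm_add_le (g' a - g a) (g a - g b)
    rw [← e2] at t1
    have r1 := hrel a
    have r2 : ‖g b - g' b‖ ≤ α * ‖g b‖ := by
      rw [norm_sub_rev]; exact hrel b
    have r3 : ‖g a - g b‖ ≤ L * ‖b - a‖ := by
      have t := hlip a b
      rwa [norm_sub_rev a b] at t
    have h4 : ‖g' a - g' b‖ ≤ α * ‖g a‖ + L * ‖b - a‖ + α * ‖g b‖ := by linarith
    exact mul_le_mul_of_nonneg_left h4 hη.le
  -- abbreviations for the divisions
  set P := (η ^ 2 * (1 - α) ^ 2)⁻¹ with hP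
  set M := α ^ 2 / μ with hM
  have hηne : η ≠ 0 := ne_of_gt hη
  have hβne : (1 - α) ≠ 0 := ne_of_gt hβ
  have hμne : μ ≠ 0 := ne_of_gt hμ
  have hP0 : 0 < P := by rw [hP]; positivity
  have hM0 : 0 ≤ M := by rw [hM]; positivity
  have hPmul : P * (η ^ 2 * (1 - α) ^ 2) = 1 := by
    rw [hP]; field_simp
  have hMmul : M * μ = α ^ 2 := by
    rw [hM]; field_simp
  clear_value P M
  -- squared bounds
  have hGa2 : Ga ^ 2 ≤ P * D ^ 2 := by
    have h0 : 0 ≤ η * (1 - α) * Ga := by positivity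
    have hsq : (η * (1 - α) * Ga) ^ 2 ≤ D ^ 2 := by nlinarith [hGaD]
    have h2 : η ^ 2 * (1 - α) ^ 2 * Ga ^ 2 ≤ D ^ 2 := by nlinarith [hsq]
    have h3 := mul_le_mul_of_nonneg_left h2 hP0.le
    calc Ga ^ 2 = P * (η ^ 2 * (1 - α) ^ 2) * Ga ^ 2 := by rw [hPmul]; ring
      _ = P * (η ^ 2 * (1 - α) ^ 2 * Ga ^ 2) := by ring
      _ ≤ P * D ^ 2 := h3
  have hGb2 : Gb ^ 2 ≤ 2 * L ^ 2 * D ^ 2 + 2 * Ga ^ 2 := by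
    nlinarith [hGbD, hGb0, sq_nonneg (L * D - Ga)]
  have hW2 : W ^ 2 ≤ 3 * η ^ 2 * α ^ 2 * Ga ^ 2 + 3 * η ^ 2 * L ^ 2 * D ^ 2
      + 3 * η ^ 2 * α ^ 2 * Gb ^ 2 := by
    nlinarith [hWb, hW0, sq_nonneg (η * α * Ga - η * L * D),
      sq_nonneg (η * α * Ga - η * α * Gb), sq_nonneg (η * L * D - η * α * Gb)]
  -- Young's inequality step
  have hYoung : 2 * α * Gb * V ≤ μ * V ^ 2 + M * Gb ^ 2 := by
    have h0 : 0 ≤ μ * (μ * V ^ 2 + M * Gb ^ 2 - 2 * α * Gb * V) := by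
      have e : μ * (μ * V ^ 2 + M * Gb ^ 2 - 2 * α * Gb * V)
          = (μ * V - α * Gb) ^ 2 + (M * μ - α ^ 2) * Gb ^ 2 := by ring
      rw [e, hMmul]
      have := sq_nonneg (μ * V - α * Gb)
      linarith
    have h0' : μ * 0 ≤ μ * (μ * V ^ 2 + M * Gb ^ 2 - 2 * α * Gb * V) := by
      simpa using h0
    have := le_of_mul_le_mul_left h0' hμ
    linarith
  -- assemble
  have e3 : 2 * η * (μ * V ^ 2 - α * Gb * V) ≤ 2 * η * ⟪g' b, b - zstar⟫ :=
    mul_le_mul_of_nonneg_left hmono (by positivity)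
  have e4 : η * (2 * α * Gb * V) ≤ η * (μ * V ^ 2 + M * Gb ^ 2) :=
    mul_le_mul_of_nonneg_left hYoung hη.le
  have hGb2' : Gb ^ 2 ≤ 2 * L ^ 2 * D ^ 2 + 2 * (P * D ^ 2) := by linarith
  have e5 : η * M * Gb ^ 2 ≤ η * M * (2 * L ^ 2 * D ^ 2 + 2 * (P * D ^ 2)) :=
    mul_le_mul_of_nonneg_left hGb2' (by positivity)
  have e6 : 3 * η ^ 2 * α ^ 2 * Ga ^ 2 ≤ 3 * η ^ 2 * α ^ 2 * (P * D ^ 2) :=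
    mul_le_mul_of_nonneg_left hGa2 (by positivity)
  have e7 : 3 * η ^ 2 * α ^ 2 * Gb ^ 2
      ≤ 3 * η ^ 2 * α ^ 2 * (2 * L ^ 2 * D ^ 2 + 2 * (P * D ^ 2)) :=
    mul_le_mul_of_nonneg_left hGb2' (by positivity)
  -- rewrite the divisions in the goal
  have hg1 : 2 / (η ^ 2 * (1 - α) ^ 2) = 2 * P := by rw [hP]; ring
  have hg2 : 3 * α ^ 2 / (1 - α) ^ 2 = 3 * α ^ 2 * η ^ 2 * P := by
    rw [hP]; field_simp
  have hg3 : η * α ^ 2 / μ = η * M := by rw [hM]; ring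
  rw [h1, hI, hg1, hg2, hg3]
  linarith [e3, e4, e5, e6, e7, hW2]
end

section
/- Let g : ℝ^d → ℝ^d be L-Lipschitz and μ-quasi-strongly monotone with respect to a zero z* of g (0 < μ ≤ L), let g̃ be an inexact oracle for g with relative error α ∈ [0,1), and let η > 0 satisfy (η·α²/μ + 3·η²·α²)·(2L² + 2/(η²·(1 − α)²)) + 3·η²·L² + 3·α²/(1 − α)² + η·μ ≤ 1. Then the Inexact ExtraGradient iterates with step η satisfy ‖z^{k+1} − z*‖² ≤ (1 − η·μ/2)·‖z^k − z*‖² for every k, and hence ‖z^N − z*‖² ≤ (1 − η·μ/2)^N·‖z⁰ − z*‖² for every N ≥ 0. -/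
open scoped RealInnerProductSpace

private lemma eg_identity {d : ℕ} (r u v : EuclideanSpace ℝ (Fin d)) (η : ℝ) :
    ‖r - η • v‖ ^ 2 = ‖r‖ ^ 2 - 2 * η * ⟪v, r - η • u⟫ + η ^ 2 * ‖v - u‖ ^ 2
      - η ^ 2 * ‖u‖ ^ 2 := by
  simp only [norm_sub_sq_real, inner_sub_right, real_inner_smul_left, real_inner_smul_right,
    norm_smul, Real.norm_eq_abs, mul_pow, sq_abs, real_inner_comm v r, real_inner_comm v u]
  ring

private lemma sq3 {x y w W : ℝ} (hW : 0 ≤ W) (hx : 0 ≤ x) (hy : 0 ≤ y) (hw : 0 ≤ w)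
    (h : W ≤ x + y + w) : W ^ 2 ≤ 3 * x ^ 2 + 3 * y ^ 2 + 3 * w ^ 2 := by
  have h4 := mul_le_mul h h hW (by positivity)
  nlinarith [h4, sq_nonneg (x - y), sq_nonneg (x - w), sq_nonneg (y - w)]

private lemma sq2 {x y W : ℝ} (hW : 0 ≤ W) (hx : 0 ≤ x) (hy : 0 ≤ y)
    (h : W ≤ x + y) : W ^ 2 ≤ 2 * x ^ 2 + 2 * y ^ 2 := by
  have h4 := mul_le_mul h h hW (by positivity)
  nlinarith [h4, sq_nonneg (x - y)]

set_option maxHeartbeats 1000000 in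
/-- Theorem 8 (linear convergence of the Inexact ExtraGradient method on a
Lipschitz, quasi-strongly monotone nonlinear equation, under the step-size /
error condition). -/
theorem stmt_18 {d : ℕ} (μ L : ℝ) (hμ : 0 < μ) (hμL : μ ≤ L)
    (g : EuclideanSpace ℝ (Fin d) → EuclideanSpace ℝ (Fin d))
    (zstar : EuclideanSpace ℝ (Fin d)) (hzstar : g zstar = 0)
    (hlip : ∀ x y, ‖g x - g y‖ ≤ L * ‖x - y‖)
    (hqsm : ∀ x, ⟪g x, x - zstar⟫ ≥ μ * ‖x - zstar‖ ^ 2)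
    (α : ℝ) (hα₀ : 0 ≤ α) (hα₁ : α < 1)
    (g' : EuclideanSpace ℝ (Fin d) → EuclideanSpace ℝ (Fin d))
    (hrel : ∀ z, ‖g' z - g z‖ ≤ α * ‖g z‖)
    (η : ℝ) (hη : 0 < η)
    (hcond : (η * α ^ 2 / μ + 3 * η ^ 2 * α ^ 2)
          * (2 * L ^ 2 + 2 / (η ^ 2 * (1 - α) ^ 2))
        + 3 * η ^ 2 * L ^ 2 + 3 * α ^ 2 / (1 - α) ^ 2 + η * μ ≤ 1)
    (z zh : ℕ → EuclideanSpace ℝ (Fin d))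
    (hzh : ∀ k, zh k = z k - η • g' (z k))
    (hz : ∀ k, z (k + 1) = z k - η • g' (zh k)) :
    (∀ k, ‖z (k + 1) - zstar‖ ^ 2 ≤ (1 - η * μ / 2) * ‖z k - zstar‖ ^ 2) ∧
      ∀ N : ℕ, ‖z N - zstar‖ ^ 2 ≤ (1 - η * μ / 2) ^ N * ‖z 0 - zstar‖ ^ 2 := by
  have hL : 0 < L := lt_of_lt_of_le hμ hμL
  have hα1' : (0:ℝ) < 1 - α := by linarith
  -- abbreviations for the constants in the condition
  set K : ℝ := η * α ^ 2 / μ + 3 * η ^ 2 * α ^ 2 with hKdef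
  have hK : 0 ≤ K := by positivity
  set M : ℝ := 2 * L ^ 2 + 2 / (η ^ 2 * (1 - α) ^ 2) with hMdef
  have hM : η ^ 2 * M = 2 * L ^ 2 * η ^ 2 + 2 / (1 - α) ^ 2 := by
    rw [hMdef]; field_simp
  have hM0 : (0:ℝ) ≤ M := by positivity
  clear_value K M
  have hstep : ∀ k, ‖z (k + 1) - zstar‖ ^ 2 ≤ (1 - η * μ / 2) * ‖z k - zstar‖ ^ 2 := by
    intro k
    set x := z k with hx
    have hxh : zh k = x - η • g' x := hzh k
    set u := g' x with hu
    set v := g' (zh k) with hv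
    set r := x - zstar with hr
    have hrh : zh k - zstar = r - η • u := by rw [hxh, hr]; module
    -- abbreviations for scalars
    set a : ℝ := ‖r‖ with ha
    set b : ℝ := ‖r - η • u‖ with hb
    set c : ℝ := ‖u‖ with hc
    set P : ℝ := ‖g x‖ with hP
    set Q : ℝ := ‖g (zh k)‖ with hQ
    set W : ℝ := ‖v - u‖ with hW
    have hb0 : 0 ≤ b := norm_nonneg _
    have hc0 : 0 ≤ c := norm_nonneg _
    have hP0 : 0 ≤ P := norm_nonneg _
    have hQ0 : 0 ≤ Q := norm_nonneg _
    have hW0 : 0 ≤ W := norm_nonneg _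
    set ip : ℝ := ⟪v, r - η • u⟫ with hip
    -- the main identity
    have hid : ‖z (k + 1) - zstar‖ ^ 2
        = a ^ 2 - 2 * η * ip + η ^ 2 * W ^ 2 - η ^ 2 * c ^ 2 := by
      have h1 : z (k + 1) - zstar = r - η • v := by rw [hz k, hr]; module
      rw [h1, ha, hW, hc, hip]
      exact eg_identity r u v η
    -- F1: quasi-strong monotonicity with error
    have F1 : ip ≥ μ * b ^ 2 - α * Q * b := by
      rw [hip]
      have h1 : ⟪g (zh k), zh k - zstar⟫ ≥ μ * ‖zh k - zstar‖ ^ 2 := hqsm (zh k)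
      have h2 : |⟪v - g (zh k), zh k - zstar⟫| ≤ ‖v - g (zh k)‖ * ‖zh k - zstar‖ :=
        abs_real_inner_le_norm _ _
      have h3 : ‖v - g (zh k)‖ ≤ α * Q := hrel (zh k)
      have h4 : ⟪v, zh k - zstar⟫
          = ⟪g (zh k), zh k - zstar⟫ + ⟪v - g (zh k), zh k - zstar⟫ := by
        rw [inner_sub_left]; ring
      have h5 : ‖v - g (zh k)‖ * ‖zh k - zstar‖ ≤ α * Q * ‖zh k - zstar‖ :=
        mul_le_mul_of_nonneg_right h3 (norm_nonneg _)
      have h6 : ⟪v - g (zh k), zh k - zstar⟫ ≥ -(α * Q * ‖zh k - zstar‖) := by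
        have := neg_abs_le (⟪v - g (zh k), zh k - zstar⟫ : ℝ)
        linarith
      rw [hrh] at h1 h4 h6
      rw [← hb] at h6
      linarith [h4, h1, h6]
    -- F2: Young's inequality
    have F2 : α * Q * b ≤ μ / 2 * b ^ 2 + α ^ 2 / (2 * μ) * Q ^ 2 := by
      have key : μ / 2 * b ^ 2 + α ^ 2 / (2 * μ) * Q ^ 2 - α * Q * b
          = (μ * b - α * Q) ^ 2 / (2 * μ) := by field_simp; ring
      linarith [key, div_nonneg (sq_nonneg (μ * b - α * Q)) (by linarith : (0:ℝ) ≤ 2 * μ)]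
    -- F3: bound on W
    have hxhx : ‖zh k - x‖ = η * c := by
      have : zh k - x = -(η • u) := by rw [hxh]; module
      rw [this, norm_neg, norm_smul, Real.norm_eq_abs, abs_of_pos hη, hc]
    have F3 : W ≤ α * Q + L * (η * c) + α * P := by
      have h1 : v - u = (v - g (zh k)) + (g (zh k) - g x) + (g x - u) := by module
      have h2 : ‖g (zh k) - g x‖ ≤ L * (η * c) := by
        have := hlip (zh k) x; rw [hxhx] at this; exact this
      have h3 : ‖g x - u‖ ≤ α * P := by
        have := hrel x; rw [← norm_neg] at this
        simpa [neg_sub] using this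
      calc W = ‖(v - g (zh k)) + (g (zh k) - g x) + (g x - u)‖ := by rw [hW, h1]
        _ ≤ ‖v - g (zh k)‖ + ‖g (zh k) - g x‖ + ‖g x - u‖ := norm_add₃_le
        _ ≤ α * Q + L * (η * c) + α * P := by
            have := hrel (zh k); gcongr <;> assumption
    -- F4: ‖g x‖ in terms of ‖g' x‖
    have F4 : (1 - α) * P ≤ c := by
      have h1 : ‖g x‖ ≤ ‖u‖ + ‖g x - u‖ := by
        have : g x = u + (g x - u) := by module
        calc ‖g x‖ = ‖u + (g x - u)‖ := by rw [← this]
          _ ≤ ‖u‖ + ‖g x - u‖ := norm_add_le _ _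
      have h3 : ‖g x - u‖ ≤ α * P := by
        have := hrel x; rw [← norm_neg] at this
        simpa [neg_sub] using this
      rw [← hP, ← hc] at h1
      linarith
    -- F5: bound on Q²
    have F5lin : Q ≤ P + L * (η * c) := by
      have h2 : ‖g (zh k) - g x‖ ≤ L * (η * c) := by
        have := hlip (zh k) x; rw [hxhx] at this; exact this
      calc Q = ‖g x + (g (zh k) - g x)‖ := by rw [hQ]; congr 1; module
        _ ≤ ‖g x‖ + ‖g (zh k) - g x‖ := norm_add_le _ _
        _ ≤ P + L * (η * c) := by rw [← hP]; linarith
    -- F6: bound ‖r‖² by the half-step quantities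
    have F6lin : a ≤ b + η * c := by
      have h2 : r = (r - η • u) + η • u := by module
      have h3 : ‖η • u‖ = η * c := by
        rw [norm_smul, Real.norm_eq_abs, abs_of_pos hη, hc]
      calc a = ‖(r - η • u) + η • u‖ := by rw [ha, ← h2]
        _ ≤ ‖r - η • u‖ + ‖η • u‖ := norm_add_le _ _
        _ = b + η * c := by rw [← hb, h3]
    have ha0 : (0:ℝ) ≤ a := ha ▸ norm_nonneg _
    clear_value a b c P Q W ip
    rw [hid]
    clear hid hxh hrh hxhx hx hu hv hr ha hb hc hP hQ hW hip
    clear x u v r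
    clear hzh hz hqsm hrel hlip hzstar
    clear g g' z zh zstar
    have F3' : W ^ 2 ≤ 3 * α ^ 2 * Q ^ 2 + 3 * L ^ 2 * η ^ 2 * c ^ 2 + 3 * α ^ 2 * P ^ 2 := by
      have h := sq3 hW0 (by positivity) (by positivity) (by positivity) F3
      linarith [h]
    have F4' : P ^ 2 ≤ c ^ 2 / (1 - α) ^ 2 := by
      rw [le_div_iff₀ (by positivity)]
      have h := mul_le_mul F4 F4 (mul_nonneg hα1'.le hP0) hc0
      linarith [h]
    have F5 : Q ^ 2 ≤ 2 * P ^ 2 + 2 * L ^ 2 * η ^ 2 * c ^ 2 := by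
      have h := sq2 hQ0 hP0 (by positivity) F5lin
      linarith [h]
    have F6 : a ^ 2 ≤ 2 * b ^ 2 + 2 * η ^ 2 * c ^ 2 := by
      have h := sq2 ha0 hb0 (by positivity) F6lin
      linarith [h]
    -- assemble everything
    have hKQ : K * Q ^ 2 = η * α ^ 2 / μ * Q ^ 2 + 3 * η ^ 2 * α ^ 2 * Q ^ 2 := by
      rw [hKdef]; ring
    have E1 : a ^ 2 - 2 * η * ip + η ^ 2 * W ^ 2 - η ^ 2 * c ^ 2
        ≤ a ^ 2 - η * μ * b ^ 2 + K * Q ^ 2 + 3 * η ^ 4 * L ^ 2 * c ^ 2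
          + 3 * η ^ 2 * α ^ 2 * P ^ 2 - η ^ 2 * c ^ 2 := by
      have h1 : η ^ 2 * W ^ 2 ≤ η ^ 2 * (3 * α ^ 2 * Q ^ 2 + 3 * L ^ 2 * η ^ 2 * c ^ 2
          + 3 * α ^ 2 * P ^ 2) := mul_le_mul_of_nonneg_left F3' (by positivity)
      have h2 := mul_le_mul_of_nonneg_left F1 (by positivity : (0:ℝ) ≤ 2 * η)
      have h3 : 2 * η * (α * Q * b) ≤ 2 * η * (μ / 2 * b ^ 2 + α ^ 2 / (2 * μ) * Q ^ 2) :=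
        mul_le_mul_of_nonneg_left F2 (by positivity)
      have h4 : 2 * η * (α ^ 2 / (2 * μ) * Q ^ 2) = η * α ^ 2 / μ * Q ^ 2 := by
        field_simp
      linarith [h1, h2, h3, h4, hKQ]
    have E3 : a ^ 2 - 2 * η * ip + η ^ 2 * W ^ 2 - η ^ 2 * c ^ 2
        ≤ a ^ 2 - η * μ * b ^ 2 + (2 * K + 3 * η ^ 2 * α ^ 2) * (c ^ 2 / (1 - α) ^ 2)
          + 2 * K * L ^ 2 * η ^ 2 * c ^ 2 + 3 * η ^ 4 * L ^ 2 * c ^ 2 - η ^ 2 * c ^ 2 := by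
      have h1 := mul_le_mul_of_nonneg_left F5 hK
      have h2 := mul_le_mul_of_nonneg_left F4'
        (show (0:ℝ) ≤ 2 * K + 3 * η ^ 2 * α ^ 2 by positivity)
      linarith [E1, h1, h2]
    have hcc : (K * M + 3 * η ^ 2 * L ^ 2 + 3 * α ^ 2 / (1 - α) ^ 2 + η * μ) * (η ^ 2 * c ^ 2)
        ≤ 1 * (η ^ 2 * c ^ 2) :=
      mul_le_mul_of_nonneg_right hcond (by positivity)
    have e1 : K * M * (η ^ 2 * c ^ 2)
        = 2 * K * L ^ 2 * η ^ 2 * c ^ 2 + 2 * K * (c ^ 2 / (1 - α) ^ 2) := by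
      have h : K * M * (η ^ 2 * c ^ 2) = K * c ^ 2 * (η ^ 2 * M) := by ring
      rw [h, hM]; ring
    have e2 : (3 * α ^ 2 / (1 - α) ^ 2) * (η ^ 2 * c ^ 2)
        = 3 * η ^ 2 * α ^ 2 * (c ^ 2 / (1 - α) ^ 2) := by ring
    have E4 : a ^ 2 - 2 * η * ip + η ^ 2 * W ^ 2 - η ^ 2 * c ^ 2
        ≤ a ^ 2 - η * μ * b ^ 2 - η * μ * (η ^ 2 * c ^ 2) := by
      linarith [E3, hcc, e1, e2]
    have h7 : η * μ / 2 * a ^ 2 ≤ η * μ / 2 * (2 * b ^ 2 + 2 * η ^ 2 * c ^ 2) :=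
      mul_le_mul_of_nonneg_left F6 (by positivity)
    linarith [E4, h7]
  refine ⟨hstep, ?_⟩
  have hρ0 : 0 ≤ 1 - η * μ / 2 := by
    have h1 : 0 ≤ K * M := mul_nonneg hK hM0
    have h2 : (0:ℝ) ≤ 3 * η ^ 2 * L ^ 2 := by positivity
    have h3 : (0:ℝ) ≤ 3 * α ^ 2 / (1 - α) ^ 2 := by positivity
    linarith [hcond, h1, h2, h3]
  intro N
  induction N with
  | zero => simp
  | succ n ih =>
      calc ‖z (n + 1) - zstar‖ ^ 2 ≤ (1 - η * μ / 2) * ‖z n - zstar‖ ^ 2 := hstep n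
        _ ≤ (1 - η * μ / 2) * ((1 - η * μ / 2) ^ n * ‖z 0 - zstar‖ ^ 2) :=
            mul_le_mul_of_nonneg_left ih hρ0
        _ = (1 - η * μ / 2) ^ (n + 1) * ‖z 0 - zstar‖ ^ 2 := by ring
end
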